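/- arXiv:1507.05766 — 8 statements merged into one kernel-verified Lean document; each statement's English description precedes it below -/
import Mathlib

section
/- Let S be an action-based randomization mechanism, U an uncertainty measure, p a prior distribution on the secret set X, and σ a finite strategy. Then the information leakage is nonnegative, I_σ(S,p) ≥ 0; moreover, if the secret X and the observation sequence Y are independent under the joint distribution p_σ, then I_σ(S,p) = 0. -/
/-!
The posteriors `p_σ(·|ys)`, weighted by `p_σ(ys)`, average to the prior `p`, so Jensen's
inequality for the concave `U` gives `U_σ(X|Y) ≤ U(p)`; under independence every posterior is
the prior itself. That the weights `p_σ(ys)` form a probability distribution comes from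
telescoping the likelihoods over the finite domain of `σ`.
-/

open scoped BigOperators Classical

noncomputable section

variable {X Y A : Type*}

/-- Conditional product of transition probabilities along `ys`, where the action at each
step is chosen by the strategy `σ` applied to the accumulated prefix `pre`
(`0` if the strategy is undefined on some prefix). -/
def likAux (M : A → X → Y → ℝ) (σ : List Y → Option A) (x : X) : List Y → List Y → ℝ
  | _, [] => 1
  | pre, y :: ys => ((σ pre).elim 0 fun a => M a x y) * likAux M σ x (pre ++ [y]) ys

/-- `p_σ(ys | x)`: the probability of the (maximal) observation sequence `ys`
given the secret `x`, under the finite strategy `σ`. A sequence is maximal when its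
last proper prefix is in the domain of `σ` but the sequence itself is not. -/
def condDist (M : A → X → Y → ℝ) (σ : List Y → Option A) (x : X) (ys : List Y) : ℝ :=
  if ys ≠ [] ∧ (σ ys.dropLast).isSome ∧ σ ys = none then likAux M σ x [] ys else 0

/-- joint distribution `p_σ(x, ys)` induced by the prior `p` and the strategy `σ`. -/
def joint (M : A → X → Y → ℝ) (σ : List Y → Option A) (p : X → ℝ) (x : X) (ys : List Y) : ℝ :=
  p x * condDist M σ x ys

/-- marginal `p_σ(ys)` on observation sequences. -/
def obsProb [Fintype X] (M : A → X → Y → ℝ) (σ : List Y → Option A) (p : X → ℝ)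
    (ys : List Y) : ℝ :=
  ∑ x : X, joint M σ p x ys

/-- posterior `p_σ(·|ys)` on secrets. -/
def post [Fintype X] (M : A → X → Y → ℝ) (σ : List Y → Option A) (p : X → ℝ)
    (ys : List Y) : X → ℝ :=
  fun x => joint M σ p x ys / obsProb M σ p ys

/-- conditional uncertainty `U_σ(X|Y) = Σ_{ys : p_σ(ys)>0} p_σ(ys)·U(p_σ(·|ys))`
(terms with `p_σ(ys) = 0` contribute `0`). -/
def condUncert [Fintype X] (U : (X → ℝ) → ℝ) (M : A → X → Y → ℝ) (σ : List Y → Option A)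
    (p : X → ℝ) : ℝ :=
  ∑' ys : List Y, obsProb M σ p ys * U (post M σ p ys)

/-- information leakage `I_σ(S,p) = U(p) − U_σ(X|Y)`. -/
def leak [Fintype X] (U : (X → ℝ) → ℝ) (M : A → X → Y → ℝ) (σ : List Y → Option A)
    (p : X → ℝ) : ℝ :=
  U p - condUncert U M σ p

/-- the domain of a strategy is prefix-closed. -/
def PrefixClosed (σ : List Y → Option A) : Prop :=
  ∀ l l' : List Y, l <+: l' → (σ l').isSome → (σ l).isSome

/-- a finite strategy: nonempty prefix-closed finite domain. -/
def FiniteStrategy (σ : List Y → Option A) : Prop :=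
  (σ []).isSome ∧ PrefixClosed σ ∧ {l : List Y | (σ l).isSome}.Finite

/-- the strategy has length exactly `n` (one plus the maximal length of a sequence
in its domain). -/
def HasLength (σ : List Y → Option A) (n : ℕ) : Prop :=
  (∀ ys, (σ ys).isSome → ys.length + 1 ≤ n) ∧ ∃ ys, (σ ys).isSome ∧ ys.length + 1 = n

/-- the set of actions occurring in a strategy. -/
def rangeActs (σ : List Y → Option A) : Set A :=
  {a | ∃ ys, σ ys = some a}

/-- the non-adaptive (complete) strategy playing the listed actions in order:
the action played only depends on the number of past observations. -/
def ofList (as : List A) : List Y → Option A := fun ys => as[ys.length]?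

/-- an action-based randomization mechanism: each row of each matrix `M_a` is a
probability distribution on observations. -/
def IsMechanism [Fintype Y] (M : A → X → Y → ℝ) : Prop :=
  ∀ a x, M a x ∈ stdSimplex ℝ Y

/-- an uncertainty measure: concave and continuous on the probability simplex. -/
def IsUncertainty [Fintype X] (U : (X → ℝ) → ℝ) : Prop :=
  ConcaveOn ℝ (stdSimplex ℝ X) U ∧ ContinuousOn U (stdSimplex ℝ X)

/-- `X`-marginal of the joint distribution `p_σ`. -/
def margX (M : A → X → Y → ℝ) (σ : List Y → Option A) (p : X → ℝ) (x : X) : ℝ :=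
  ∑' ys : List Y, joint M σ p x ys

section Posterior

variable [Fintype X] {β : Type*} {q : X → β → ℝ} {E : Finset β}

lemma tsum_mass_mul_eq_sum_filter (hqE : ∀ x, ∀ b ∉ E, q x b = 0) (f : β → ℝ) :
    ∑' b, (∑ x, q x b) * f b = ∑ b ∈ E with ∑ x, q x b ≠ 0, (∑ x, q x b) * f b := by
  rw [tsum_eq_sum (s := E) fun b hb => by simp [hqE _ b hb]]
  exact (Finset.sum_filter_of_ne fun b _ h => left_ne_zero_of_mul h).symm

lemma sum_filter_mass_eq_one (hmass : ∑ x, ∑ b ∈ E, q x b = 1) :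
    ∑ b ∈ E with ∑ x, q x b ≠ 0, ∑ x, q x b = 1 := by
  rw [Finset.sum_filter_ne_zero, Finset.sum_comm, hmass]

lemma posterior_mem_stdSimplex (hq : ∀ x b, 0 ≤ q x b) {b : β} (hb : ∑ x, q x b ≠ 0) :
    (fun x => q x b / ∑ x', q x' b) ∈ stdSimplex ℝ X :=
  ⟨fun x => div_nonneg (hq x b) (Finset.sum_nonneg fun x' _ => hq x' b),
    by rw [← Finset.sum_div, div_self hb]⟩

lemma sum_mass_smul_posterior (hq : ∀ x b, 0 ≤ q x b) :
    ∑ b ∈ E with ∑ x, q x b ≠ 0, (∑ x, q x b) • (fun x => q x b / ∑ x', q x' b) =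
      fun x => ∑ b ∈ E, q x b := by
  funext x
  rw [Finset.sum_apply]
  calc ∑ b ∈ E with ∑ x, q x b ≠ 0, ((∑ x, q x b) • fun x => q x b / ∑ x', q x' b) x
      = ∑ b ∈ E with ∑ x, q x b ≠ 0, q x b :=
        Finset.sum_congr rfl fun b hb => mul_div_cancel₀ _ (Finset.mem_filter.1 hb).2
    _ = ∑ b ∈ E, q x b := by
        refine Finset.sum_filter_of_ne fun b _ hqb hmass => hqb ?_
        exact (Finset.sum_eq_zero_iff_of_nonneg fun x' _ => hq x' b).1 hmass x (Finset.mem_univ x)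

lemma tsum_mass_mul_posterior_le {U : (X → ℝ) → ℝ} (hU : ConcaveOn ℝ (stdSimplex ℝ X) U)
    (hq : ∀ x b, 0 ≤ q x b) (hqE : ∀ x, ∀ b ∉ E, q x b = 0)
    (hmass : ∑ x, ∑ b ∈ E, q x b = 1) :
    ∑' b, (∑ x, q x b) * U (fun x => q x b / ∑ x', q x' b) ≤
      U fun x => ∑ b ∈ E, q x b := by
  rw [tsum_mass_mul_eq_sum_filter hqE, ← sum_mass_smul_posterior hq]
  exact hU.le_map_sum (fun b _ => Finset.sum_nonneg fun x _ => hq x b)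
    (sum_filter_mass_eq_one hmass)
    fun b hb => posterior_mem_stdSimplex hq (Finset.mem_filter.1 hb).2

lemma tsum_mass_mul_posterior_eq_of_indep (U : (X → ℝ) → ℝ) {p : X → ℝ}
    (hind : ∀ x b, q x b = p x * ∑ x', q x' b) (hqE : ∀ x, ∀ b ∉ E, q x b = 0)
    (hmass : ∑ x, ∑ b ∈ E, q x b = 1) :
    ∑' b, (∑ x, q x b) * U (fun x => q x b / ∑ x', q x' b) = U p := by
  have hposterior : ∀ b, ∑ x, q x b ≠ 0 → (fun x => q x b / ∑ x', q x' b) = p :=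
    fun b hb => funext fun x => by rw [hind x b, mul_div_cancel_right₀ _ hb]
  rw [tsum_mass_mul_eq_sum_filter hqE,
    Finset.sum_congr rfl fun b hb => by rw [hposterior b (Finset.mem_filter.1 hb).2],
    ← Finset.sum_mul, sum_filter_mass_eq_one hmass, one_mul]

end Posterior

section Strategy

variable {M : A → X → Y → ℝ} {σ : List Y → Option A}

def oneStepExtensions [Fintype Y] (D : Finset (List Y)) : Finset (List Y) :=
  (D ×ˢ Finset.univ).image fun q => q.1 ++ [q.2]

lemma mem_oneStepExtensions [Fintype Y] {D : Finset (List Y)} {l : List Y} :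
    l ∈ oneStepExtensions D ↔ l ≠ [] ∧ l.dropLast ∈ D := by
  constructor
  · intro hl
    obtain ⟨⟨t, y⟩, hty, rfl⟩ := Finset.mem_image.1 hl
    exact ⟨by simp, by simpa using (Finset.mem_product.1 hty).1⟩
  · rintro ⟨hne, hD⟩
    exact Finset.mem_image.2 ⟨(l.dropLast, l.getLast hne), Finset.mem_product.2
      ⟨hD, Finset.mem_univ _⟩, List.dropLast_append_getLast hne⟩

lemma likAux_concat (x : X) (pre l : List Y) (y : Y) :
    likAux M σ x pre (l ++ [y]) =
      likAux M σ x pre l * (σ (pre ++ l)).elim 0 fun a => M a x y := by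
  induction l generalizing pre with
  | nil => simp [likAux]
  | cons z l ih => simp [likAux, ih, mul_assoc]

lemma likAux_nonneg (hM : ∀ a x y, 0 ≤ M a x y) (x : X) (pre l : List Y) :
    0 ≤ likAux M σ x pre l := by
  induction l generalizing pre with
  | nil => exact zero_le_one
  | cons y l ih =>
    refine mul_nonneg ?_ (ih _)
    cases σ pre with
    | none => exact le_rfl
    | some a => exact hM a x y

lemma condDist_nonneg (hM : ∀ a x y, 0 ≤ M a x y) (x : X) (ys : List Y) :
    0 ≤ condDist M σ x ys := by
  unfold condDist
  split
  · exact likAux_nonneg hM x [] ys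
  · exact le_rfl

lemma sum_likAux_oneStepExtensions [Fintype Y] (hM : IsMechanism M) (x : X)
    {D : Finset (List Y)} (hD : ∀ l ∈ D, (σ l).isSome) :
    ∑ l ∈ oneStepExtensions D, likAux M σ x [] l = ∑ l ∈ D, likAux M σ x [] l := by
  have hinj : Set.InjOn (fun q : List Y × Y => q.1 ++ [q.2])
      ((D ×ˢ Finset.univ : Finset (List Y × Y)) : Set (List Y × Y)) := by
    rintro ⟨t₁, y₁⟩ - ⟨t₂, y₂⟩ - h
    obtain ⟨rfl, hy⟩ := List.append_inj' h rfl
    simpa using hy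
  rw [oneStepExtensions, Finset.sum_image hinj, Finset.sum_product]
  refine Finset.sum_congr rfl fun l hl => ?_
  obtain ⟨a, ha⟩ := Option.isSome_iff_exists.1 (hD l hl)
  simp only [likAux_concat, List.nil_append, ha, Option.elim_some, ← Finset.mul_sum,
    (hM a x).2, mul_one]

namespace FiniteStrategy

variable (hσ : FiniteStrategy σ)

def domain : Finset (List Y) := hσ.2.2.toFinset

lemma mem_domain {l : List Y} : l ∈ hσ.domain ↔ (σ l).isSome := hσ.2.2.mem_toFinset

lemma condDist_eq_zero [Fintype Y] {x : X} {ys : List Y}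
    (hys : ys ∉ oneStepExtensions hσ.domain) : condDist M σ x ys = 0 :=
  if_neg fun h => hys (mem_oneStepExtensions.2 ⟨h.1, hσ.mem_domain.2 h.2.1⟩)

/-- The one-step extensions of the domain are the nonroot domain sequences together with the
maximal sequences; telescoping the likelihood over them leaves the mass `1` of the root. -/
lemma sum_condDist_eq_one [Fintype Y] (hM : IsMechanism M) (x : X) :
    ∑ ys ∈ oneStepExtensions hσ.domain, condDist M σ x ys = 1 := by
  set E := oneStepExtensions hσ.domain
  have hinner : E.filter (fun l => (σ l).isSome) = hσ.domain.erase [] := by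
    ext l
    simp only [E, Finset.mem_filter, Finset.mem_erase, mem_oneStepExtensions, mem_domain]
    exact ⟨fun h => ⟨h.1.1, h.2⟩,
      fun h => ⟨⟨h.1, hσ.2.1 _ _ (List.dropLast_prefix l) h.2⟩, h.2⟩⟩
  have hleaves : ∑ ys ∈ E, condDist M σ x ys =
      ∑ ys ∈ E.filter (fun l => ¬(σ l).isSome), likAux M σ x [] ys := by
    rw [Finset.sum_filter]
    refine Finset.sum_congr rfl fun ys hys => ?_
    obtain ⟨hne, hD⟩ := mem_oneStepExtensions.1 hys
    rw [hσ.mem_domain] at hD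
    by_cases h : σ ys = none <;> simp [condDist, hne, hD, h, Option.isSome_iff_ne_none]
  have hsplit := Finset.sum_filter_add_sum_filter_not E (fun l => (σ l).isSome)
    (likAux M σ x [])
  have hroot := Finset.add_sum_erase hσ.domain (likAux M σ x []) (hσ.mem_domain.2 hσ.1)
  rw [hinner, sum_likAux_oneStepExtensions hM x fun l => hσ.mem_domain.1, ← hroot] at hsplit
  rw [hleaves]
  simp only [likAux] at hsplit
  linarith

end FiniteStrategy

end Strategy

theorem leak_nonneg_and_eq_zero_of_indep_general
    [Fintype X] [Fintype Y]
    (M : A → X → Y → ℝ) (hM : IsMechanism M)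
    (U : (X → ℝ) → ℝ) (hU : IsUncertainty U)
    (p : X → ℝ) (hp : p ∈ stdSimplex ℝ X)
    (σ : List Y → Option A) (hσ : FiniteStrategy σ) :
    0 ≤ leak U M σ p ∧
      ((∀ x ys, joint M σ p x ys = margX M σ p x * obsProb M σ p ys) →
        leak U M σ p = 0) := by
  set E := oneStepExtensions hσ.domain
  have hq : ∀ x ys, 0 ≤ joint M σ p x ys := fun x ys =>
    mul_nonneg (hp.1 x) (condDist_nonneg (fun a x y => (hM a x).1 y) x ys)
  have hqE : ∀ x, ∀ ys ∉ E, joint M σ p x ys = 0 := fun x ys hys => by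
    rw [joint, hσ.condDist_eq_zero hys, mul_zero]
  have hmarg : ∀ x, ∑ ys ∈ E, joint M σ p x ys = p x := fun x => by
    simp only [joint]
    rw [← Finset.mul_sum, hσ.sum_condDist_eq_one hM x, mul_one]
  have hmass : ∑ x, ∑ ys ∈ E, joint M σ p x ys = 1 := by simp only [hmarg]; exact hp.2
  have hmargX : ∀ x, margX M σ p x = p x := fun x => (tsum_eq_sum (hqE x)).trans (hmarg x)
  refine ⟨sub_nonneg.2 ?_, fun hind => sub_eq_zero.2 ?_⟩
  · have hjensen := tsum_mass_mul_posterior_le hU.1 hq hqE hmass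
    rwa [funext hmarg] at hjensen
  · exact (tsum_mass_mul_posterior_eq_of_indep U (fun x ys => by rw [hind, hmargX]; rfl)
      hqE hmass).symm

/-- Lemma 2.5: for any mechanism, uncertainty measure, prior and finite
strategy, the leakage is nonnegative; moreover it is `0` whenever the secret and the
observation sequence are independent under the joint distribution `p_σ`. -/
theorem leak_nonneg_and_eq_zero_of_indep
    [Fintype X] [Fintype Y] [Fintype A] [Nonempty X] [Nonempty Y] [Nonempty A]
    (M : A → X → Y → ℝ) (hM : IsMechanism M)
    (U : (X → ℝ) → ℝ) (hU : IsUncertainty U)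
    (p : X → ℝ) (hp : p ∈ stdSimplex ℝ X)
    (σ : List Y → Option A) (hσ : FiniteStrategy σ) :
    0 ≤ leak U M σ p ∧
      ((∀ x ys, joint M σ p x ys = margX M σ p x * obsProb M σ p ys) →
        leak U M σ p = 0) :=
  leak_nonneg_and_eq_zero_of_indep_general M hM U hU p hp σ hσ

end
end

section
/- Let S be an action-based randomization mechanism. For secrets x, x' ∈ X, one has p_σ(·|x) = p_σ(·|x') for every finite strategy σ if and only if p_a(·|x) = p_a(·|x') for every action a ∈ Act. In other words, the indistinguishability relation ≡ equals the intersection of the relations ≡_a over a ∈ Act. -/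
open scoped BigOperators Classical

noncomputable section

variable {X Y A : Type*}

/-- Lemma 4.2 / Definition 4.1: two secrets `x, x'` satisfy
`p_σ(·|x) = p_σ(·|x')` for every finite strategy `σ` if and only if
`p_a(·|x) = p_a(·|x')` for every action `a`; i.e. the indistinguishability
relation `≡` is `⋂_{a ∈ Act} ≡_a`. -/
theorem indistinguishable_iff_single_actions
    [Fintype X] [Fintype Y] [Fintype A] [Nonempty X] [Nonempty Y] [Nonempty A]
    (M : A → X → Y → ℝ) (hM : IsMechanism M) (x x' : X) :
    (∀ σ : List Y → Option A, FiniteStrategy σ →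
        ∀ ys : List Y, condDist M σ x ys = condDist M σ x' ys) ↔
      (∀ a : A, ∀ y : Y, M a x y = M a x' y) := by
  constructor
  · intro h a y
    set σ : List Y → Option A := fun l => if l = [] then some a else none with hσdef
    have hfs : FiniteStrategy σ := by
      refine ⟨by simp [σ], ?_, ?_⟩
      · intro l l' hpre hs
        by_contra hl
        have hl' : l' ≠ [] := by
          rintro rfl
          exact hl (by simpa using List.prefix_nil.mp hpre ▸ hs)
        simp [σ, hl'] at hs
      · apply Set.Finite.subset (Set.finite_singleton ([] : List Y))
        intro l hl
        by_contra hne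
        simp [σ, hne] at hl
    have := h σ hfs [y]
    simpa [condDist, σ, likAux] using this
  · intro h σ hσ ys
    have key : ∀ ys pre, likAux M σ x pre ys = likAux M σ x' pre ys := by
      intro ys
      induction ys with
      | nil => intro pre; rfl
      | cons y ys ih =>
        intro pre
        simp only [likAux, ih]
        congr 1
        cases σ pre with
        | none => rfl
        | some a => simp [h a y]
    unfold condDist
    split
    · exact key ys []
    · rfl

end
end

section
/- Let φ be a boolean formula in u free boolean variables, and let S be the deterministic mechanism with X = Y = {0,1}, Act = {0,1}^u, defined by the boolean function f(x, b_1,…,b_u) = x ∧ φ(b_1,…,b_u) (i.e. p_b(y|x)=1 iff f(x,b)=y). Let p be the uniform prior on {0,1}, and let U be an uncertainty measure such that U vanishes on point-mass distributions and U is strictly positive on the uniform distribution. Then there exists a strategy σ of length 1 with I_σ(S,p) > 0 if and only if φ is satisfiable. -/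
open scoped BigOperators Classical

noncomputable section

variable {X Y A : Type*}

/-!
A strategy of length one plays a single action `b`. If `φ b` holds, the channel `x ↦ x ∧ φ b` is
the identity, every posterior is a point mass and all of `U p > 0` leaks; otherwise the output is
constantly `false`, the posterior equals the prior and nothing leaks.
-/

def singleAction (a : A) : List Y → Option A :=
  fun ys => if ys = [] then some a else none

@[simp]
lemma isSome_singleAction_iff {a : A} {ys : List Y} :
    (singleAction a ys).isSome ↔ ys = [] := by
  by_cases h : ys = [] <;> simp [singleAction, h]

lemma finiteStrategy_singleAction (a : A) :
    FiniteStrategy (singleAction a : List Y → Option A) := by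
  refine ⟨by simp, fun l l' hpre h => ?_, (Set.finite_singleton []).subset fun l hl => ?_⟩
  · rw [isSome_singleAction_iff] at h ⊢
    subst h
    exact List.prefix_nil.mp hpre
  · simpa using hl

lemma length_singleAction_le_one (a : A) :
    ∀ ys : List Y, (singleAction a ys).isSome → ys.length + 1 ≤ 1 := by
  simp

lemma eq_singleAction_of_length_le_one {σ : List Y → Option A} {a : A} (h0 : σ [] = some a)
    (hlen : ∀ ys, (σ ys).isSome → ys.length + 1 ≤ 1) : σ = singleAction a := by
  funext ys
  cases ys with
  | nil => simpa [singleAction] using h0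
  | cons y ys =>
    have hnone : ¬ (σ (y :: ys)).isSome := fun h => by simpa using hlen _ h
    simpa [singleAction] using hnone

section SingleAction

variable (M : A → X → Y → ℝ) (a : A) (p : X → ℝ)

lemma condDist_singleAction_singleton (x : X) (y : Y) :
    condDist M (singleAction a) x [y] = M a x y := by
  simp [condDist, singleAction, likAux]

lemma condDist_singleAction_of_ne_singleton (x : X) {ys : List Y} (h : ∀ y, ys ≠ [y]) :
    condDist M (singleAction a) x ys = 0 := by
  rcases ys with _ | ⟨y, _ | ⟨z, t⟩⟩
  · simp [condDist]
  · exact absurd rfl (h y)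
  · simp [condDist, singleAction]

lemma condUncert_singleAction [Fintype X] [Fintype Y] (U : (X → ℝ) → ℝ) :
    condUncert U M (singleAction a) p =
      ∑ y, obsProb M (singleAction a) p [y] * U (post M (singleAction a) p [y]) := by
  rw [condUncert, tsum_eq_sum (s := Finset.univ.map ⟨fun y => [y], List.singleton_injective⟩),
    Finset.sum_map]
  · rfl
  intro ys hys
  have h : ∀ y, ys ≠ [y] := by simpa [eq_comm] using hys
  simp [obsProb, joint, condDist_singleAction_of_ne_singleton M a _ h]

/-- With the junk value `0 / 0 = 0`, an observation of probability zero contributes nothing,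
as the restriction to `p_a(y) > 0` in the paper prescribes. -/
lemma leak_singleAction [Fintype X] [Fintype Y] (U : (X → ℝ) → ℝ) :
    leak U M (singleAction a) p =
      U p - ∑ y, (∑ x, p x * M a x y) *
        U (fun x => p x * M a x y / ∑ x', p x' * M a x' y) := by
  rw [leak, condUncert_singleAction]
  unfold post
  simp only [obsProb, joint, condDist_singleAction_singleton]

end SingleAction

lemma leak_singleAction_eq_self_of_noiseless [Fintype X] [DecidableEq X] (U : (X → ℝ) → ℝ)
    (M : A → X → X → ℝ) (a : A) (p : X → ℝ)
    (hpoint : ∀ x₀, U (fun x => if x = x₀ then 1 else 0) = 0)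
    (hM : ∀ x y, M a x y = if x = y then 1 else 0) :
    leak U M (singleAction a) p = U p := by
  rw [leak_singleAction, sub_eq_self]
  refine Finset.sum_eq_zero fun y _ => ?_
  simp only [hM, mul_ite, mul_one, mul_zero, Finset.sum_ite_eq', Finset.mem_univ, if_true]
  rcases eq_or_ne (p y) 0 with hy | hy
  · rw [hy, zero_mul]
  · have hposterior : (fun x => (if x = y then p x else 0) / p y) =
        fun x => if x = y then 1 else 0 := by
      funext x
      split_ifs with hx
      · rw [hx, div_self hy]
      · exact zero_div _
    rw [hposterior, hpoint, mul_zero]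

lemma leak_singleAction_eq_zero_of_const [Fintype X] [Fintype Y] (U : (X → ℝ) → ℝ)
    (M : A → X → Y → ℝ) (a : A) (p : X → ℝ) (q : Y → ℝ) (hM : ∀ x, M a x = q)
    (hq : ∑ y, q y = 1) (hp : ∑ x, p x = 1) :
    leak U M (singleAction a) p = 0 := by
  have hterm : ∀ y, (∑ x, p x * q y) * U (fun x => p x * q y / ∑ x', p x' * q y) =
      q y * U p := by
    intro y
    rw [← Finset.sum_mul, hp, one_mul]
    rcases eq_or_ne (q y) 0 with hy | hy
    · rw [hy, zero_mul, zero_mul]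
    · simp only [mul_div_cancel_right₀ _ hy]
  rw [leak_singleAction, sub_eq_zero]
  simp only [hM, hterm]
  rw [← Finset.sum_mul, hq, one_mul]

theorem length_one_positive_leak_iff_satisfiable_general
    (u : ℕ) (φ : (Fin u → Bool) → Bool)
    (U : (Bool → ℝ) → ℝ)
    (hpoint : ∀ b : Bool, U (fun x => if x = b then 1 else 0) = 0)
    (hunif : 0 < U (fun _ => (1 : ℝ) / 2)) :
    (∃ σ : List Bool → Option (Fin u → Bool),
        FiniteStrategy σ ∧ (∀ ys, (σ ys).isSome → ys.length + 1 ≤ 1) ∧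
        0 < leak U (fun b x y => if (x && φ b) = y then (1 : ℝ) else 0) σ
            (fun _ => (1 : ℝ) / 2)) ↔
      (∃ b : Fin u → Bool, φ b = true) := by
  constructor
  · rintro ⟨σ, ⟨h0, -, -⟩, hlen, hpos⟩
    obtain ⟨a, ha⟩ := Option.isSome_iff_exists.mp h0
    rw [eq_singleAction_of_length_le_one ha hlen] at hpos
    refine ⟨a, by_contra fun hφ => hpos.ne' ?_⟩
    refine leak_singleAction_eq_zero_of_const _ _ _ _ (fun y => if false = y then 1 else 0)
      (fun x => ?_) (by simp) (by norm_num)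
    simp [Bool.eq_false_iff.mpr hφ]
  · rintro ⟨a, ha⟩
    refine ⟨singleAction a, finiteStrategy_singleAction a, length_singleAction_le_one a, ?_⟩
    rwa [leak_singleAction_eq_self_of_noiseless _ _ _ _ hpoint fun x y => by simp [ha]]

/-- Theorem 4.4, key reduction: for the deterministic mechanism with
secrets and observations `{0,1}`, actions `{0,1}^u`, defined by
`f(x,b) = x ∧ φ(b)`, the uniform prior on `{0,1}`, and any uncertainty measure `U`
vanishing on point masses and strictly positive on the uniform distribution,
there exists a strategy of length 1 with strictly positive leakage
iff `φ` is satisfiable. -/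
theorem length_one_positive_leak_iff_satisfiable
    (u : ℕ) (φ : (Fin u → Bool) → Bool)
    (U : (Bool → ℝ) → ℝ) (hU : IsUncertainty U)
    (hpoint : ∀ b : Bool, U (fun x => if x = b then 1 else 0) = 0)
    (hunif : 0 < U (fun _ => (1 : ℝ) / 2)) :
    (∃ σ : List Bool → Option (Fin u → Bool),
        FiniteStrategy σ ∧ (∀ ys, (σ ys).isSome → ys.length + 1 ≤ 1) ∧
        0 < leak U (fun b x y => if (x && φ b) = y then (1 : ℝ) else 0) σ
            (fun _ => (1 : ℝ) / 2)) ↔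
      (∃ b : Fin u → Bool, φ b = true) :=
  length_one_positive_leak_iff_satisfiable_general u φ U hpoint hunif

end
end

section
/- Let S be an action-based randomization mechanism, U an uncertainty measure and p a prior on X. For each finite strategy σ of length l, there exists a non-adaptive finite strategy σ' of length |range(σ)| × l (e.g. the strategy playing each of the actions occurring in σ for l times each, in any fixed order) such that I_{σ'}(S,p) ≥ I_σ(S,p). -/
open scoped BigOperators Classical

noncomputable section

variable {X Y A : Type*}

/-!
Let the non-adaptive strategy play every action occurring in `σ` `l` times. From its outcome
`w` one can replay `σ`: the `c`-th time `σ` plays `a`, it is answered by the observation of the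
`c`-th copy of `a` in `w`. Distinct steps of a play of `σ` read distinct coordinates of `w`,
which are independent given the secret, so the replayed play has exactly the distribution of a
play of `σ`. Thus the observation of `σ` is a function of that of the non-adaptive strategy, and
coarsening observations can only raise the expected posterior uncertainty
`∑ p(y) U(p(·|y))`: the perspective `v ↦ (∑ v) U(v / ∑ v)` of a concave `U` is superadditive.
-/

/-- The term `p(y) U(p(·|y))` of `condUncert`, as a function of the column `v = p(·, y)` of
the joint distribution. -/
def perspective [Fintype X] (U : (X → ℝ) → ℝ) (v : X → ℝ) : ℝ :=
  (∑ x, v x) * U (fun x => v x / ∑ x', v x')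

section Perspective

variable {ι : Type*} [Fintype X] {U : (X → ℝ) → ℝ}

@[simp]
lemma perspective_zero : perspective U 0 = 0 := by
  simp [perspective]

lemma condUncert_eq_tsum_perspective (M : A → X → Y → ℝ) (σ : List Y → Option A) (p : X → ℝ) :
    condUncert U M σ p = ∑' ys, perspective U (fun x => joint M σ p x ys) :=
  rfl

lemma div_sum_mem_stdSimplex {v : X → ℝ} (hv : 0 ≤ v) (hpos : 0 < ∑ x, v x) :
    (fun x => v x / ∑ x', v x') ∈ stdSimplex ℝ X :=
  ⟨fun x => div_nonneg (hv x) hpos.le, by rw [← Finset.sum_div, div_self hpos.ne']⟩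

lemma eq_zero_of_nonneg_of_sum_eq_zero {v : X → ℝ} (hv : 0 ≤ v) (h : ∑ x, v x = 0) : v = 0 :=
  funext fun x => (Finset.sum_eq_zero_iff_of_nonneg fun x _ => hv x).mp h x (Finset.mem_univ x)

lemma add_perspective_le (hU : ConcaveOn ℝ (stdSimplex ℝ X) U) {u v : X → ℝ} (hu : 0 ≤ u)
    (hv : 0 ≤ v) : perspective U u + perspective U v ≤ perspective U (u + v) := by
  rcases (Finset.sum_nonneg fun x _ => hu x).eq_or_lt with ha | ha
  · simp [eq_zero_of_nonneg_of_sum_eq_zero hu ha.symm]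
  rcases (Finset.sum_nonneg fun x _ => hv x).eq_or_lt with hb | hb
  · simp [eq_zero_of_nonneg_of_sum_eq_zero hv hb.symm]
  set a := ∑ x, u x
  set b := ∑ x, v x
  have hab : ∑ x, (u + v) x = a + b := Finset.sum_add_distrib
  have hconc := hU.2 (div_sum_mem_stdSimplex hu ha) (div_sum_mem_stdSimplex hv hb)
    (div_nonneg ha.le (add_pos ha hb).le) (div_nonneg hb.le (add_pos ha hb).le)
    (by field_simp)
  have hcomb : (a / (a + b)) • (fun x => u x / a) + (b / (a + b)) • (fun x => v x / b) =
      fun x => (u + v) x / (a + b) := by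
    funext x
    simp only [Pi.add_apply, Pi.smul_apply, smul_eq_mul]
    field_simp
  rw [hcomb, smul_eq_mul, smul_eq_mul] at hconc
  calc perspective U u + perspective U v
      = (a + b) * (a / (a + b) * U (fun x => u x / a) + b / (a + b) * U (fun x => v x / b)) := by
        show a * U (fun x => u x / a) + b * U (fun x => v x / b) = _
        field_simp
    _ ≤ (a + b) * U (fun x => (u + v) x / (a + b)) :=
        mul_le_mul_of_nonneg_left hconc (add_pos ha hb).le
    _ = perspective U (u + v) := by rw [perspective, hab]

lemma sum_perspective_le (hU : ConcaveOn ℝ (stdSimplex ℝ X) U) {t : Finset ι}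
    {v : ι → X → ℝ} (hv : ∀ i ∈ t, 0 ≤ v i) :
    ∑ i ∈ t, perspective U (v i) ≤ perspective U (∑ i ∈ t, v i) := by
  induction t using Finset.induction_on with
  | empty => simp
  | insert i t hi ih =>
    rw [Finset.sum_insert hi, Finset.sum_insert hi]
    have hvt : ∀ j ∈ t, 0 ≤ v j := fun j hj => hv j (Finset.mem_insert_of_mem hj)
    calc perspective U (v i) + ∑ j ∈ t, perspective U (v j)
        ≤ perspective U (v i) + perspective U (∑ j ∈ t, v j) := by gcongr; exact ih hvt
      _ ≤ perspective U (v i + ∑ j ∈ t, v j) :=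
        add_perspective_le hU (hv i (Finset.mem_insert_self i t)) (Finset.sum_nonneg hvt)

/-- Conditional uncertainty can only grow when observations are coarsened along `f`. -/
lemma sum_perspective_le_tsum_of_fibres {W Z : Type*} [Fintype W] [DecidableEq Z]
    (hU : ConcaveOn ℝ (stdSimplex ℝ X) U) {J : W → X → ℝ} (hJ : ∀ w, 0 ≤ J w) (f : W → Z)
    {K : Z → X → ℝ} (hK : ∀ z, K z = ∑ w with f w = z, J w) :
    ∑ w, perspective U (J w) ≤ ∑' z, perspective U (K z) := by
  rw [tsum_eq_sum (s := Finset.univ.image f) fun z hz => by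
    rw [hK, Finset.filter_false_of_mem (by simpa using hz), Finset.sum_empty, perspective_zero]]
  calc ∑ w, perspective U (J w)
      = ∑ z ∈ Finset.univ.image f, ∑ w with f w = z, perspective U (J w) :=
        (Finset.sum_fiberwise_of_maps_to (fun w _ => Finset.mem_image_of_mem f (by simp)) _).symm
    _ ≤ ∑ z ∈ Finset.univ.image f, perspective U (K z) :=
        Finset.sum_le_sum fun z _ => (hK z).symm ▸ sum_perspective_le hU fun w _ => hJ w

end Perspective

def IsLeaf (σ : List Y → Option A) (z : List Y) : Prop :=
  z ≠ [] ∧ (σ z.dropLast).isSome ∧ σ z = none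

section Likelihood

variable {σ : List Y → Option A} {z : List Y}

lemma likAux_eq_prod (M : A → X → Y → ℝ) (x : X) (pre zs : List Y) :
    likAux M σ x pre zs = ∏ i : Fin zs.length, (σ (pre ++ zs.take i)).elim 0 (M · x zs[i]) := by
  induction zs generalizing pre with
  | nil => simp [likAux]
  | cons y ys ih => simp [likAux, ih, Fin.prod_univ_succ, List.append_assoc]

lemma condDist_of_isLeaf (M : A → X → Y → ℝ) (x : X) (hz : IsLeaf σ z) :
    condDist M σ x z = ∏ i : Fin z.length, (σ (z.take i)).elim 0 (M · x z[i]) := by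
  rw [condDist, if_pos (show z ≠ [] ∧ (σ z.dropLast).isSome ∧ σ z = none from hz), likAux_eq_prod]
  simp

lemma condDist_of_not_isLeaf (M : A → X → Y → ℝ) (x : X) (hz : ¬IsLeaf σ z) :
    condDist M σ x z = 0 :=
  if_neg hz

lemma IsLeaf.isSome_take (hpc : PrefixClosed σ) (hz : IsLeaf σ z) {i : ℕ} (hi : i < z.length) :
    (σ (z.take i)).isSome :=
  hpc _ _ (List.dropLast_eq_take ▸ List.take_prefix_take_left (by omega)) hz.2.1

end Likelihood

section OfList

variable {as : List A}

lemma isSome_ofList {ys : List Y} : (ofList as ys).isSome ↔ ys.length < as.length := by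
  simp [ofList]

lemma isLeaf_ofList_iff (has : as ≠ []) {w : List Y} :
    IsLeaf (ofList as) w ↔ w.length = as.length := by
  have := List.length_pos_iff.mpr has
  simp only [IsLeaf, isSome_ofList, List.length_dropLast, ne_eq, ← List.length_eq_zero_iff]
  simp only [ofList, List.getElem?_eq_none_iff]
  omega

lemma finiteStrategy_ofList [Finite Y] (has : as ≠ []) :
    FiniteStrategy (ofList as : List Y → Option A) := by
  refine ⟨isSome_ofList.mpr (List.length_pos_iff.mpr has), fun q q' h h' => ?_, ?_⟩
  · exact isSome_ofList.mpr ((h.length_le).trans_lt (isSome_ofList.mp h'))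
  · simpa only [isSome_ofList] using List.finite_length_lt Y as.length

lemma hasLength_ofList (d : Y) (has : as ≠ []) :
    HasLength (ofList as : List Y → Option A) as.length := by
  have := List.length_pos_iff.mpr has
  refine ⟨fun ys h => isSome_ofList.mp h, List.replicate (as.length - 1) d, ?_, ?_⟩
  · simp only [isSome_ofList, List.length_replicate]; omega
  · simp only [List.length_replicate]; omega

lemma condDist_ofList_ofFn (M : A → X → Y → ℝ) (has : as ≠ []) (x : X) (f : Fin as.length → Y) :
    condDist M (ofList as) x (List.ofFn f) = ∏ i, M as[i] x (f i) := by
  rw [condDist_of_isLeaf M x ((isLeaf_ofList_iff has).mpr (List.length_ofFn))]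
  rw [← Fin.prod_congr' _ List.length_ofFn.symm]
  refine Finset.prod_congr rfl fun i _ => ?_
  simp [ofList]

end OfList

def useCount (σ : List Y → Option A) (q : List Y) (a : A) : ℕ :=
  (List.range q.length).countP fun j => σ (q.take j) = some a

section UseCount

variable {σ : List Y → Option A} {a : A}

lemma useCount_le_length (q : List Y) : useCount σ q a ≤ q.length :=
  List.countP_le_length.trans (List.length_range).le

lemma useCount_append_singleton (q : List Y) (y : Y) :
    useCount σ (q ++ [y]) a = useCount σ q a + if σ q = some a then 1 else 0 := by
  rw [useCount, List.length_append, List.length_singleton, List.range_succ, List.countP_append]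
  congr 1
  · refine List.countP_congr fun j hj => ?_
    rw [List.take_append_of_le_length (List.mem_range.mp hj).le]
  · simp

lemma useCount_mono {q q' : List Y} (h : q <+: q') : useCount σ q a ≤ useCount σ q' a := by
  obtain ⟨t, rfl⟩ := h
  induction t using List.reverseRecOn with
  | nil => simp
  | append_singleton t y ih =>
    rw [← List.append_assoc, useCount_append_singleton]
    omega

lemma useCount_take_lt {z : List Y} {i j : ℕ} (hij : i < j) (hj : j ≤ z.length)
    (ha : σ (z.take i) = some a) : useCount σ (z.take i) a < useCount σ (z.take j) a := by
  have hsucc := useCount_append_singleton (σ := σ) (a := a) (z.take i) z[i]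
  rw [List.take_concat_get', if_pos ha] at hsucc
  have hmono := useCount_mono (σ := σ) (a := a)
    (List.take_prefix_take_left (l := z) (show i + 1 ≤ j from hij))
  omega

end UseCount

def run (σ : List Y → Option A) (r : List Y → A → Y) : ℕ → List Y → List Y
  | 0, q => q
  | n + 1, q => (σ q).elim q fun a => run σ r n (q ++ [r q a])

def Consistent (σ : List Y → Option A) (r : List Y → A → Y) (z : List Y) : Prop :=
  ∀ i (hi : i < z.length), (σ (z.take i)).map (r (z.take i)) = some z[i]

def IsPlay (σ : List Y → Option A) (r : List Y → A → Y) (z : List Y) : Prop :=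
  Consistent σ r z ∧ σ z = none

section Run

variable {σ : List Y → Option A} {r : List Y → A → Y}

lemma Consistent.append_singleton {q : List Y} (hq : Consistent σ r q) {a : A}
    (ha : σ q = some a) : Consistent σ r (q ++ [r q a]) := by
  intro i hi
  rw [List.length_append, List.length_singleton] at hi
  rcases Nat.lt_or_ge i q.length with hiq | hiq
  · rw [List.take_append_of_le_length hiq.le, List.getElem_append_left hiq]
    exact hq i hiq
  · obtain rfl : i = q.length := by omega
    simp [ha]

lemma Consistent.isSome_take {z : List Y} (hz : Consistent σ r z) {i : ℕ} (hi : i < z.length) :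
    (σ (z.take i)).isSome := by
  rw [← Option.isSome_map (f := r (z.take i)), hz i hi, Option.isSome_some]

lemma run_eq_of_isPlay {z : List Y} (hz : IsPlay σ r z) (n : ℕ) {q : List Y} (hq : q <+: z)
    (hlen : z.length ≤ q.length + n) : run σ r n q = z := by
  induction n generalizing q with
  | zero => exact hq.eq_of_length_le hlen
  | succ n ih =>
    rcases eq_or_ne q z with rfl | hqz
    · simp [run, hz.2]
    have hlt : q.length < z.length :=
      lt_of_le_of_ne hq.length_le fun h => hqz (hq.eq_of_length_le h.ge)
    have htake : z.take q.length = q := (List.prefix_iff_eq_take.mp hq).symm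
    obtain ⟨a, ha, hra⟩ := Option.map_eq_some_iff.mp (htake ▸ hz.1 q.length hlt)
    have hnext : q ++ [r q a] <+: z := by
      have := List.take_concat_get' z q.length hlt
      rw [htake] at this
      rw [hra, this]
      exact List.take_prefix _ _
    simp only [run, ha, Option.elim]
    exact ih hnext (by simp; omega)

lemma isPlay_run (n : ℕ) {q : List Y} (hq : Consistent σ r q)
    (hdepth : ∀ q', (σ q').isSome → q'.length < q.length + n) : IsPlay σ r (run σ r n q) := by
  induction n generalizing q with
  | zero =>
    refine ⟨hq, Option.not_isSome_iff_eq_none.mp fun h => ?_⟩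
    exact (hdepth q h).ne rfl
  | succ n ih =>
    cases ha : σ q with
    | none => simpa [run, ha] using ⟨hq, ha⟩
    | some a =>
      simp only [run, ha, Option.elim]
      refine ih (hq.append_singleton ha) fun q' h => ?_
      have := hdepth q' h
      simp only [List.length_append, List.length_singleton]
      omega

lemma run_eq_iff {n : ℕ} (hdepth : ∀ q, (σ q).isSome → q.length < n) {z : List Y} :
    run σ r n [] = z ↔ IsPlay σ r z := by
  constructor
  · rintro rfl
    exact isPlay_run n (fun i hi => by simp at hi) (by simpa using hdepth)
  · intro hz
    refine run_eq_of_isPlay hz n List.nil_prefix ?_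
    rcases Nat.eq_zero_or_pos z.length with h0 | hpos
    · simp [h0]
    have := hdepth _ (hz.1.isSome_take (i := z.length - 1) (by omega))
    simp only [List.length_take] at this
    omega

lemma IsPlay.isLeaf (hroot : (σ []).isSome) {z : List Y} (hz : IsPlay σ r z) : IsLeaf σ z := by
  have hne : z ≠ [] := by
    rintro rfl
    simp [hz.2] at hroot
  refine ⟨hne, ?_, hz.2⟩
  have hpos : 0 < z.length := List.length_pos_iff.mpr hne
  rw [List.dropLast_eq_take]
  exact hz.1.isSome_take (by omega)

end Run

lemma sum_filter_prod_of_injective {ι κ R : Type*} [Fintype ι] [DecidableEq ι] [Fintype κ]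
    [Fintype Y] [CommSemiring R] (g : ι → Y → R) (hg : ∀ j, ∑ y, g j y = 1) {e : κ → ι}
    (he : Function.Injective e) (v : κ → Y) :
    ∑ f : ι → Y with ∀ k, f (e k) = v k, ∏ j, g j (f j) = ∏ k, g (e k) (v k) := by
  calc ∑ f : ι → Y with ∀ k, f (e k) = v k, ∏ j, g j (f j)
      = ∑ f : ι → Y, ∏ j, if ∀ k, e k = j → f j = v k then g j (f j) else 0 := by
        rw [Finset.sum_filter]
        refine Finset.sum_congr rfl fun f _ => ?_
        split_ifs with hf
        · exact Finset.prod_congr rfl fun j _ => (if_pos fun k hk => hk ▸ hf k).symm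
        · obtain ⟨k, hk⟩ := not_forall.mp hf
          exact (Finset.prod_eq_zero (Finset.mem_univ (e k)) (if_neg fun h => hk (h k rfl))).symm
    _ = ∏ j, ∑ y, if ∀ k, e k = j → y = v k then g j y else 0 := by
        rw [Finset.prod_univ_sum, Fintype.piFinset_univ]
    _ = ∏ k, g (e k) (v k) := by
        refine (Fintype.prod_of_injective e he _ _ (fun j hj => ?_) fun k => ?_).symm
        · simp only [Set.mem_range, not_exists] at hj
          simp [hj, hg]
        · simp [he.eq_iff]

/-- `slot a c` is the position in `as` of the `c`-th copy of `a`. -/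
def IsLayout (R : Set A) (l : ℕ) (as : List A) (slot : A → ℕ → ℕ) : Prop :=
  (∀ a ∈ R, ∀ c < l, as[slot a c]? = some a) ∧ ∀ a ∈ R, Set.InjOn (slot a) (Set.Iio l)

lemma exists_isLayout {R : Set A} (hR : R.Finite) (l : ℕ) :
    ∃ (as : List A) (slot : A → ℕ → ℕ), as.length = R.ncard * l ∧ IsLayout R l as slot := by
  have := hR.to_subtype
  let e : R ≃ Fin R.ncard := Finite.equivFin R
  have hblock : ∀ (b : Fin R.ncard) {c : ℕ}, c < l →
      (b * l + c) / l = b ∧ b * l + c < R.ncard * l :=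
    fun b c hc => ⟨by rw [Nat.add_comm, Nat.add_mul_div_right _ _ (by omega), Nat.div_eq_of_lt hc,
      zero_add], by nlinarith [b.2]⟩
  refine ⟨List.ofFn fun j : Fin (R.ncard * l) =>
      (e.symm ⟨j / l, Nat.div_lt_of_lt_mul (Nat.mul_comm R.ncard l ▸ j.2)⟩ : A),
    fun a c => if h : a ∈ R then e ⟨a, h⟩ * l + c else 0, List.length_ofFn, fun a ha c hc => ?_,
    fun a ha c _ c' _ h => by simpa [dif_pos ha] using h⟩
  obtain ⟨hdiv, hlt⟩ := hblock (e ⟨a, ha⟩) hc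
  simp [dif_pos ha, hlt, hdiv]

lemma finite_rangeActs {σ : List Y → Option A} (h : {q : List Y | (σ q).isSome}.Finite) :
    (rangeActs σ).Finite :=
  ((h.image σ).preimage (Option.some_injective A).injOn).subset fun a ⟨q, hq⟩ =>
    ⟨q, by simp [hq], hq⟩

/-- Replay the adaptive `σ` on the outcome `w` of a non-adaptive run: the `c`-th time `σ`
plays `a`, it is answered by the observation at position `slot a c` of `w`. -/
def simulate (σ : List Y → Option A) (slot : A → ℕ → ℕ) (d : Y) (n : ℕ) (w : List Y) :
    List Y :=
  run σ (fun q a => w.getD (slot a (useCount σ q a)) d) n []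

section Simulation

variable {σ : List Y → Option A} {l : ℕ} {as : List A} {slot : A → ℕ → ℕ}

lemma useCount_lt_of_isSome (hdepth : ∀ q, (σ q).isSome → q.length < l) {q : List Y} {a : A}
    (ha : σ q = some a) : useCount σ q a < l :=
  (useCount_le_length q).trans_lt (hdepth q (by simp [ha]))

lemma IsLayout.eq_of_slot_eq (hlay : IsLayout (rangeActs σ) l as slot)
    (hdepth : ∀ q, (σ q).isSome → q.length < l) {z : List Y} {i j : ℕ} (hi : i < z.length)
    (hj : j < z.length) {a b : A} (ha : σ (z.take i) = some a) (hb : σ (z.take j) = some b)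
    (h : slot a (useCount σ (z.take i) a) = slot b (useCount σ (z.take j) b)) : i = j := by
  obtain rfl : a = b := Option.some_injective _ <|
    (hlay.1 a ⟨_, ha⟩ _ (useCount_lt_of_isSome hdepth ha)).symm.trans
      (h ▸ hlay.1 b ⟨_, hb⟩ _ (useCount_lt_of_isSome hdepth hb))
  have hc := hlay.2 a ⟨_, ha⟩ (useCount_lt_of_isSome hdepth ha)
    (useCount_lt_of_isSome hdepth hb) h
  rcases lt_trichotomy i j with hij | rfl | hij
  · exact absurd hc (useCount_take_lt hij hj.le ha).ne
  · rfl
  · exact absurd hc (useCount_take_lt hij hi.le hb).ne'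

lemma condDist_eq_sum_simulate [Fintype Y] {M : A → X → Y → ℝ} (hM : IsMechanism M)
    (hpc : PrefixClosed σ) (hroot : (σ []).isSome) (hdepth : ∀ q, (σ q).isSome → q.length < l)
    (hlay : IsLayout (rangeActs σ) l as slot) (d : Y) (x : X) (z : List Y) :
    condDist M σ x z =
      ∑ f : Fin as.length → Y with simulate σ slot d l (List.ofFn f) = z, ∏ i, M as[i] x (f i) := by
  by_cases hz : IsLeaf σ z
  swap
  · refine (condDist_of_not_isLeaf M x hz).trans (Finset.sum_eq_zero fun f hf => ?_).symm
    rw [Finset.mem_filter, simulate, run_eq_iff hdepth] at hf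
    exact absurd (hf.2.isLeaf hroot) hz
  choose act hact using fun i : Fin z.length => Option.isSome_iff_exists.mp (hz.isSome_take hpc i.2)
  have hslot (i : Fin z.length) :
      as[slot (act i) (useCount σ (z.take i) (act i))]? = some (act i) :=
    hlay.1 _ ⟨_, hact i⟩ _ (useCount_lt_of_isSome hdepth (hact i))
  -- the coordinate of the non-adaptive outcome that answers step `i` of `z`
  let ι (i : Fin z.length) : Fin as.length := ⟨_, (List.getElem?_eq_some_iff.mp (hslot i)).1⟩
  have hι : Function.Injective ι := fun i j hij =>
    Fin.ext (hlay.eq_of_slot_eq hdepth i.2 j.2 (hact i) (hact j) (Fin.val_eq_of_eq hij))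
  have hsim (f : Fin as.length → Y) :
      simulate σ slot d l (List.ofFn f) = z ↔ ∀ i, f (ι i) = z[i] := by
    rw [simulate, run_eq_iff hdepth, IsPlay, and_iff_left hz.2.2, Consistent, Fin.forall_iff]
    refine forall₂_congr fun i hi => ?_
    rw [hact ⟨i, hi⟩, Option.map_some, Option.some_inj,
      List.getD_eq_getElem _ _ (by rw [List.length_ofFn]; exact (ι ⟨i, hi⟩).2), List.getElem_ofFn]
    rfl
  calc condDist M σ x z = ∏ i, M as[ι i] x z[i] := by
        rw [condDist_of_isLeaf M x hz]
        refine Finset.prod_congr rfl fun i _ => ?_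
        have has : as[ι i] = act i := (List.getElem?_eq_some_iff.mp (hslot i)).2
        rw [hact i, has]
        rfl
    _ = _ := by
        rw [← sum_filter_prod_of_injective (fun j => M as[j] x) (fun j => (hM _ x).2) hι]
        refine Finset.sum_congr (Finset.ext fun f => ?_) fun _ _ => rfl
        simp only [Finset.mem_filter, Finset.mem_univ, true_and, hsim]

end Simulation

lemma condUncert_ofList [Fintype X] [Fintype Y] (U : (X → ℝ) → ℝ) (M : A → X → Y → ℝ) (p : X → ℝ)
    {as : List A} (has : as ≠ []) :
    condUncert U M (ofList as) p =
      ∑ f : Fin as.length → Y, perspective U (fun x => p x * ∏ i, M as[i] x (f i)) := by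
  rw [condUncert_eq_tsum_perspective, ← List.ofFn_injective.tsum_eq, tsum_fintype]
  · refine Finset.sum_congr rfl fun f _ => congrArg _ (funext fun x => ?_)
    rw [joint, condDist_ofList_ofFn M has]
  intro w hw
  by_contra hrange
  have hlen : w.length ≠ as.length := fun h =>
    hrange ⟨fun i => w[i.cast h.symm], List.ext_getElem (by simp [h]) fun _ _ _ => by simp⟩
  simp [joint, condDist_of_not_isLeaf M _ (mt (isLeaf_ofList_iff has).mp hlen), perspective] at hw

theorem nonadaptive_simulates_adaptive_general
    [Fintype X] [Fintype Y] [Nonempty Y]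
    (M : A → X → Y → ℝ) (hM : IsMechanism M)
    (U : (X → ℝ) → ℝ) (hU : IsUncertainty U)
    (p : X → ℝ) (hp : p ∈ stdSimplex ℝ X)
    (σ : List Y → Option A) (hσ : FiniteStrategy σ)
    (l : ℕ) (hl : HasLength σ l) :
    ∃ as : List A,
      as.length = (rangeActs σ).ncard * l ∧
      FiniteStrategy (ofList as : List Y → Option A) ∧
      HasLength (ofList as : List Y → Option A) ((rangeActs σ).ncard * l) ∧
      leak U M σ p ≤ leak U M (ofList as : List Y → Option A) p := by
  obtain ⟨hroot, hpc, hfin⟩ := hσ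
  obtain ⟨as, slot, hlen, hlay⟩ := exists_isLayout (finite_rangeActs hfin) l
  obtain ⟨d⟩ := ‹Nonempty Y›
  have has : as ≠ [] := by
    refine List.ne_nil_of_length_pos (hlen ▸ Nat.mul_pos ?_ ?_)
    · obtain ⟨a, ha⟩ := Option.isSome_iff_exists.mp hroot
      exact (Set.ncard_pos (finite_rangeActs hfin)).mpr ⟨a, [], ha⟩
    · obtain ⟨_, _, h⟩ := hl.2
      omega
  refine ⟨as, hlen, finiteStrategy_ofList has, hlen ▸ hasLength_ofList d has, sub_le_sub_left ?_ _⟩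
  rw [condUncert_ofList U M p has, condUncert_eq_tsum_perspective]
  refine sum_perspective_le_tsum_of_fibres hU.1
    (fun f x => mul_nonneg (hp.1 x) (Finset.prod_nonneg fun i _ => (hM _ x).1 _))
    (fun f => simulate σ slot d l (List.ofFn f)) fun z => funext fun x => ?_
  rw [Finset.sum_apply, joint, condDist_eq_sum_simulate hM hpc hroot hl.1 hlay d x z,
    Finset.mul_sum]

/-- Theorem 4.6: for each finite strategy `σ` of length `l` there is a
non-adaptive finite strategy `σ'` (given by a list of actions, hence playing actions
depending only on the number of past observations) of length `|range(σ)| × l` such that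
`I_{σ'}(S,p) ≥ I_σ(S,p)`. -/
theorem nonadaptive_simulates_adaptive
    [Fintype X] [Fintype Y] [Fintype A] [Nonempty X] [Nonempty Y] [Nonempty A]
    (M : A → X → Y → ℝ) (hM : IsMechanism M)
    (U : (X → ℝ) → ℝ) (hU : IsUncertainty U)
    (p : X → ℝ) (hp : p ∈ stdSimplex ℝ X)
    (σ : List Y → Option A) (hσ : FiniteStrategy σ)
    (l : ℕ) (hl : HasLength σ l) :
    ∃ as : List A,
      as.length = (rangeActs σ).ncard * l ∧
      FiniteStrategy (ofList as : List Y → Option A) ∧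
      HasLength (ofList as : List Y → Option A) ((rangeActs σ).ncard * l) ∧
      leak U M σ p ≤ leak U M (ofList as : List Y → Option A) p :=
  nonadaptive_simulates_adaptive_general M hM U hU p hp σ hσ l hl

end
end

section
/- Let S be a deterministic action-based randomization mechanism, U an uncertainty measure and p a prior on X. Then for each finite strategy σ there exists a non-adaptive finite strategy σ'' of length |range(σ)| such that I_{σ''}(S,p) ≥ I_σ(S,p); that is, in the deterministic case the expansion factor for simulating adaptive strategies by non-adaptive ones can be taken to be |range(σ)| rather than |range(σ)| × l. -/
open scoped BigOperators Classical

noncomputable section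

variable {X Y A : Type*}

/-! ### Auxiliary development for the proof -/

namespace NonAdaptAux

variable {X Y A : Type*}

/-- The deterministic trace of observations produced from prefix `pre` when each action `a`
deterministically produces observation `F a`, with fuel `n`. -/
def trFg (σ : List Y → Option A) (F : A → Y) : ℕ → List Y → List Y
  | 0, _ => []
  | n + 1, pre =>
    match σ pre with
    | none => []
    | some a => F a :: trFg σ F n (pre ++ [F a])

lemma trFg_congr (σ : List Y → Option A) (F1 F2 : A → Y)
    (h : ∀ a, (∃ l, σ l = some a) → F1 a = F2 a) :
    ∀ n pre, trFg σ F1 n pre = trFg σ F2 n pre := by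
  intro n
  induction n with
  | zero => intro pre; rfl
  | succ n ih =>
    intro pre
    cases hσ : σ pre with
    | none => simp [trFg, hσ]
    | some a => simp [trFg, hσ, h a ⟨pre, hσ⟩, ih]

lemma trFg_ofList (as : List A) (F : A → Y) :
    ∀ (n : ℕ) (pre : List Y),
      trFg (ofList as : List Y → Option A) F n pre = ((as.drop pre.length).take n).map F := by
  intro n
  induction n with
  | zero => intro pre; simp [trFg]
  | succ n ih =>
    intro pre
    by_cases h : pre.length < as.length
    · have hσ : (ofList as : List Y → Option A) pre = some (as[pre.length]'h) := by
        simp [ofList, List.getElem?_eq_getElem h]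
      rw [show trFg (ofList as : List Y → Option A) F (n + 1) pre =
          F (as[pre.length]'h) :: trFg (ofList as : List Y → Option A) F n
            (pre ++ [F (as[pre.length]'h)]) by simp [trFg, hσ]]
      rw [ih]
      have hdrop : as.drop pre.length = as[pre.length]'h :: as.drop (pre.length + 1) :=
        List.drop_eq_getElem_cons h
      rw [hdrop, List.take_succ_cons, List.map_cons]
      simp
    · have hσ : (ofList as : List Y → Option A) pre = none := by
        simp only [ofList]
        exact List.getElem?_eq_none (le_of_not_gt h)
      rw [show trFg (ofList as : List Y → Option A) F (n + 1) pre = [] by simp [trFg, hσ]]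
      rw [List.drop_eq_nil_of_le (le_of_not_gt h)]
      simp

lemma likAux_zero_or_one (M : A → X → Y → ℝ) (σ : List Y → Option A) (x : X)
    (hd : ∀ a y, M a x y = 0 ∨ M a x y = 1) :
    ∀ ys pre, likAux M σ x pre ys = 0 ∨ likAux M σ x pre ys = 1 := by
  intro ys
  induction ys with
  | nil => intro pre; right; rfl
  | cons y ys ih =>
    intro pre
    have h1 : ((σ pre).elim 0 fun a => M a x y) = 0 ∨ ((σ pre).elim 0 fun a => M a x y) = 1 := by
      cases σ pre with
      | none => left; rfl
      | some a => exact hd a y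
    have h2 := ih (pre ++ [y])
    rcases h1 with h1 | h1 <;> rcases h2 with h2 | h2 <;>
      simp [likAux, h1, h2]

section Char

variable (M : A → X → Y → ℝ) (σ : List Y → Option A) (x : X) (f : A → X → Y)
  (hf : ∀ a x y, M a x y = if y = f a x then 1 else 0)
  (N : ℕ) (HN : ∀ l : List Y, (σ l).isSome → l.length < N)

include hf HN

lemma lik_run : ∀ (n : ℕ) (pre : List Y), N ≤ pre.length + n →
    likAux M σ x pre (trFg σ (fun a => f a x) n pre) = 1 ∧
      σ (pre ++ trFg σ (fun a => f a x) n pre) = none := by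
  intro n
  induction n with
  | zero =>
    intro pre hn
    have hnone : σ pre = none := by
      rcases h : σ pre with _ | a
      · rfl
      · exact absurd (HN pre (by simp [h])) (by omega)
    exact ⟨rfl, by simpa [trFg] using hnone⟩
  | succ n ih =>
    intro pre hn
    rcases hσ : σ pre with _ | a
    · exact ⟨by simp [trFg, hσ, likAux], by simpa [trFg, hσ] using hσ⟩
    · have hM1 : M a x (f a x) = 1 := by rw [hf]; simp
      have hrec := ih (pre ++ [f a x]) (by simp; omega)
      constructor
      · rw [show trFg σ (fun a => f a x) (n + 1) pre =
            f a x :: trFg σ (fun a => f a x) n (pre ++ [f a x]) by simp [trFg, hσ]]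
        simp only [likAux, hσ, Option.elim, hM1, hrec.1, one_mul]
      · rw [show trFg σ (fun a => f a x) (n + 1) pre =
            f a x :: trFg σ (fun a => f a x) n (pre ++ [f a x]) by simp [trFg, hσ]]
        rw [show pre ++ f a x :: trFg σ (fun a => f a x) n (pre ++ [f a x]) =
            (pre ++ [f a x]) ++ trFg σ (fun a => f a x) n (pre ++ [f a x]) by simp]
        exact hrec.2

lemma lik_unique : ∀ (ys : List Y) (n : ℕ) (pre : List Y), N ≤ pre.length + n →
    likAux M σ x pre ys ≠ 0 → σ (pre ++ ys) = none →
    ys = trFg σ (fun a => f a x) n pre := by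
  intro ys
  induction ys with
  | nil =>
    intro n pre _ _ hnone
    simp only [List.append_nil] at hnone
    cases n with
    | zero => rfl
    | succ n => simp [trFg, hnone]
  | cons y ys ih =>
    intro n pre hn hlik hnone
    simp only [likAux, ne_eq, mul_eq_zero, not_or] at hlik
    obtain ⟨h1, h2⟩ := hlik
    rcases hσ : σ pre with _ | a
    · rw [hσ] at h1; simp at h1
    · rw [hσ] at h1
      simp only [Option.elim] at h1
      have hy : y = f a x := by
        by_contra hy
        rw [hf] at h1; simp [hy] at h1
      have hlt : pre.length < N := HN pre (by simp [hσ])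
      cases n with
      | zero => omega
      | succ n =>
        rw [show trFg σ (fun a => f a x) (n + 1) pre =
            f a x :: trFg σ (fun a => f a x) n (pre ++ [f a x]) by simp [trFg, hσ]]
        rw [← hy]
        congr 1
        exact ih n (pre ++ [y]) (by simp; omega) h2 (by simpa using hnone)

lemma trFg_dropLast : ∀ (n : ℕ) (pre : List Y), trFg σ (fun a => f a x) n pre ≠ [] →
    (σ (pre ++ (trFg σ (fun a => f a x) n pre).dropLast)).isSome := by
  intro n
  induction n with
  | zero => intro pre h; exact absurd rfl h
  | succ n ih =>
    intro pre h
    rcases hσ : σ pre with _ | a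
    · exact absurd (by simp [trFg, hσ]) h
    · rw [show trFg σ (fun a => f a x) (n + 1) pre =
          f a x :: trFg σ (fun a => f a x) n (pre ++ [f a x]) by simp [trFg, hσ]] at h ⊢
      rcases hrest : trFg σ (fun a => f a x) n (pre ++ [f a x]) with _ | ⟨z, zs⟩
      · simp [hσ]
      · rw [List.dropLast_cons_of_ne_nil (List.cons_ne_nil z zs)]
        have hih := ih (pre ++ [f a x]) (by simp [hrest])
        rw [hrest] at hih
        rw [show pre ++ f a x :: (z :: zs).dropLast =
            (pre ++ [f a x]) ++ (z :: zs).dropLast by simp]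
        exact hih

lemma condDist_char (h0 : (σ []).isSome) (ys : List Y) :
    condDist M σ x ys = if ys = trFg σ (fun a => f a x) N [] then 1 else 0 := by
  set t := trFg σ (fun a => f a x) N [] with ht
  by_cases hys : ys = t
  · subst hys
    have hN0 : 0 < N := HN [] h0
    obtain ⟨a0, ha0⟩ := Option.isSome_iff_exists.1 h0
    have htne : t ≠ [] := by
      rw [ht]
      obtain ⟨m, rfl⟩ : ∃ m, N = m + 1 := ⟨N - 1, by omega⟩
      simp [trFg, ha0]
    have hrun := lik_run M σ x f hf N HN N [] (by simp)
    have hdrop : (σ t.dropLast).isSome := by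
      have := trFg_dropLast M σ x f hf N HN N [] (by rw [← ht]; exact htne)
      simpa using this
    rw [condDist, if_pos ⟨htne, hdrop, by simpa using hrun.2⟩, if_pos rfl]
    simpa using hrun.1
  · rw [if_neg hys, condDist]
    split_ifs with hc
    · by_contra hne
      have h1 : σ ([] ++ ys) = none := by simpa using hc.2.2
      have h2 := lik_unique M σ x f hf N HN ys N [] (by simp) hne h1
      exact hys (by simpa using h2)
    · rfl

end Char

/-- Jensen-style comparison: refining the partition of secrets can only decrease the
conditional uncertainty. -/
lemma jensen_refine {X : Type*} [Fintype X] {β γ : Type*} [DecidableEq β] [DecidableEq γ]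
    (U : (X → ℝ) → ℝ) (hU : ConcaveOn ℝ (stdSimplex ℝ X) U)
    (p : X → ℝ) (hp : p ∈ stdSimplex ℝ X)
    (t : X → β) (t' : X → γ) (g : γ → β) (hg : ∀ x, t x = g (t' x)) :
    ∑ c ∈ Finset.image t' Finset.univ,
        (∑ x, p x * (if c = t' x then 1 else 0)) *
          U (fun x => p x * (if c = t' x then 1 else 0) /
            (∑ x, p x * (if c = t' x then 1 else 0)))
      ≤ ∑ b ∈ Finset.image t Finset.univ,
        (∑ x, p x * (if b = t x then 1 else 0)) *
          U (fun x => p x * (if b = t x then 1 else 0) /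
            (∑ x, p x * (if b = t x then 1 else 0))) := by
  classical
  set W : β → ℝ := fun b => ∑ x, p x * (if b = t x then 1 else 0) with hW
  set W' : γ → ℝ := fun c => ∑ x, p x * (if c = t' x then 1 else 0) with hW'
  set Q : β → X → ℝ := fun b x => p x * (if b = t x then 1 else 0) / W b with hQ
  set Q' : γ → X → ℝ := fun c x => p x * (if c = t' x then 1 else 0) / W' c with hQ'
  have hpnn : ∀ x, 0 ≤ p x := fun x => hp.1 x
  have hW'nn : ∀ c, 0 ≤ W' c := fun c =>
    Finset.sum_nonneg fun x _ => mul_nonneg (hpnn x) (by positivity)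
  have hWnn : ∀ b, 0 ≤ W b := fun b =>
    Finset.sum_nonneg fun x _ => mul_nonneg (hpnn x) (by positivity)
  change ∑ c ∈ Finset.image t' Finset.univ, W' c * U (Q' c)
      ≤ ∑ b ∈ Finset.image t Finset.univ, W b * U (Q b)
  have hmaps : ∀ c ∈ Finset.image t' Finset.univ, g c ∈ Finset.image t Finset.univ := by
    intro c hc
    obtain ⟨x, _, rfl⟩ := Finset.mem_image.1 hc
    exact Finset.mem_image.2 ⟨x, Finset.mem_univ x, hg x⟩
  rw [← Finset.sum_fiberwise_of_maps_to hmaps (fun c => W' c * U (Q' c))]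
  apply Finset.sum_le_sum
  intro b _
  set s := (Finset.image t' Finset.univ).filter fun c => g c = b with hs
  have hWb : W b = ∑ c ∈ s, W' c := by
    rw [hW']
    rw [Finset.sum_comm]
    apply Finset.sum_congr rfl
    intro x _
    have : ∑ c ∈ s, p x * (if c = t' x then 1 else 0)
        = if t' x ∈ s then p x else 0 := by
      simp_rw [mul_ite, mul_one, mul_zero]
      exact Finset.sum_ite_eq' s (t' x) fun _ => p x
    rw [this]
    have hmem : t' x ∈ s ↔ t x = b := by
      simp [hs, hg x]
    by_cases htx : t x = b
    · rw [if_pos (hmem.2 htx), if_pos htx.symm, mul_one]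
    · rw [if_neg (fun h => htx (hmem.1 h)), if_neg (fun h => htx h.symm), mul_zero]
  by_cases hb0 : W b = 0
  · have hz : ∀ c ∈ s, W' c = 0 := by
      intro c hc
      have := (Finset.sum_eq_zero_iff_of_nonneg (fun c _ => hW'nn c)).1 (hWb ▸ hb0) c hc
      exact this
    rw [hb0, zero_mul]
    apply le_of_eq
    apply Finset.sum_eq_zero
    intro c hc
    rw [hz c hc, zero_mul]
  · have hbpos : 0 < W b := lt_of_le_of_ne (hWnn b) (Ne.symm hb0)
    set s' := s.filter fun c => W' c ≠ 0 with hs'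
    have hsum_s' : ∑ c ∈ s, W' c * U (Q' c) = ∑ c ∈ s', W' c * U (Q' c) := by
      rw [hs']
      refine (Finset.sum_filter_of_ne ?_).symm
      intro c _ hne h
      exact hne (by rw [h, zero_mul])
    have hWb' : W b = ∑ c ∈ s', W' c :=
      hWb.trans (Finset.sum_filter_of_ne fun c _ hne => hne).symm
    have hw0 : ∀ c ∈ s', 0 ≤ W' c / W b := fun c _ => div_nonneg (hW'nn c) (hWnn b)
    have hw1 : ∑ c ∈ s', W' c / W b = 1 := by
      rw [← Finset.sum_div, ← hWb', div_self hb0]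
    have hmem : ∀ c ∈ s', Q' c ∈ stdSimplex ℝ X := by
      intro c hc
      have hc0 : W' c ≠ 0 := (Finset.mem_filter.1 hc).2
      constructor
      · intro x
        exact div_nonneg (mul_nonneg (hpnn x) (by positivity)) (hW'nn c)
      · show (∑ x, (p x * if c = t' x then 1 else 0) / W' c) = 1
        rw [← Finset.sum_div]
        exact div_self hc0
    have hjensen := hU.le_map_sum hw0 hw1 hmem
    have hcomb : (∑ c ∈ s', (W' c / W b) • Q' c) = Q b := by
      funext x
      rw [Finset.sum_apply]
      have hterm : ∀ c ∈ s', ((W' c / W b) • Q' c) x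
          = if c = t' x then p x / W b else 0 := by
        intro c hc
        have hc0 : W' c ≠ 0 := (Finset.mem_filter.1 hc).2
        by_cases hct : c = t' x
        · rw [if_pos hct]
          simp only [Pi.smul_apply, smul_eq_mul, hQ', if_pos hct, mul_one]
          field_simp
        · rw [if_neg hct]
          simp [hQ', if_neg hct]
      rw [Finset.sum_congr rfl hterm, Finset.sum_ite_eq' s' (t' x) (fun _ => p x / W b)]
      rw [hQ]
      simp only
      by_cases htx : t x = b
      · by_cases hpx : p x = 0
        · simp [hpx]
        · have hpxpos : 0 < p x := lt_of_le_of_ne (hpnn x) (Ne.symm hpx)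
          have hW'pos : p x ≤ W' (t' x) := by
            rw [hW']
            have := Finset.single_le_sum
              (f := fun x' => p x' * (if t' x = t' x' then 1 else 0))
              (fun x' _ => mul_nonneg (hpnn x') (by positivity)) (Finset.mem_univ x)
            simpa using this
          have ht'mem : t' x ∈ s' := by
            rw [hs', Finset.mem_filter]
            refine ⟨?_, by nlinarith⟩
            rw [hs, Finset.mem_filter]
            exact ⟨Finset.mem_image.2 ⟨x, Finset.mem_univ x, rfl⟩, (hg x).symm.trans htx⟩
          rw [if_pos ht'mem, if_pos htx.symm, mul_one]
      · have ht'not : t' x ∉ s' := by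
          intro h
          have := (Finset.mem_filter.1 ((Finset.mem_filter.1 h).1)).2
          exact htx ((hg x).trans this)
        rw [if_neg ht'not, if_neg (fun h => htx h.symm), mul_zero, zero_div]
    rw [hcomb] at hjensen
    calc ∑ c ∈ s, W' c * U (Q' c) = ∑ c ∈ s', W' c * U (Q' c) := hsum_s'
      _ = W b * ∑ c ∈ s', (W' c / W b) • U (Q' c) := by
          rw [Finset.mul_sum]
          apply Finset.sum_congr rfl
          intro c _
          rw [smul_eq_mul]
          field_simp
      _ ≤ W b * U (Q b) := by
          apply mul_le_mul_of_nonneg_left _ (hWnn b)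
          simpa using hjensen

lemma ofList_isSome {Y A : Type*} (as : List A) (l : List Y) :
    ((ofList as : List Y → Option A) l).isSome ↔ l.length < as.length := by
  simp only [ofList]
  constructor
  · intro hs
    by_contra hlt
    rw [List.getElem?_eq_none (by omega)] at hs
    simp at hs
  · intro hlt
    rw [List.getElem?_eq_getElem hlt]
    rfl

lemma condUncert_eq_sum {X Y A : Type*} [Fintype X] (U : (X → ℝ) → ℝ) (M : A → X → Y → ℝ)
    (σ : List Y → Option A) (p : X → ℝ) (t : X → List Y)
    (hchar : ∀ x ys, condDist M σ x ys = if ys = t x then 1 else 0) :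
    condUncert U M σ p =
      ∑ b ∈ Finset.image t Finset.univ,
        (∑ x, p x * (if b = t x then 1 else 0)) *
          U (fun x => p x * (if b = t x then 1 else 0) /
            (∑ x, p x * (if b = t x then 1 else 0))) := by
  classical
  have hobs : ∀ ys, obsProb M σ p ys = ∑ x, p x * (if ys = t x then 1 else 0) := by
    intro ys
    simp [obsProb, joint, hchar]
  have hpost : ∀ ys, post M σ p ys
      = fun x => p x * (if ys = t x then 1 else 0) / (∑ x, p x * (if ys = t x then 1 else 0)) := by
    intro ys
    funext x
    simp [post, joint, hchar, hobs]
  rw [condUncert, tsum_eq_sum (s := Finset.image t Finset.univ)]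
  · exact Finset.sum_congr rfl fun ys _ => by rw [hobs, hpost]
  · intro ys hys
    have : obsProb M σ p ys = 0 := by
      rw [hobs]
      apply Finset.sum_eq_zero
      intro x _
      have : ys ≠ t x := fun h => hys (Finset.mem_image.2 ⟨x, Finset.mem_univ x, h.symm⟩)
      simp [this]
    rw [this, zero_mul]

end NonAdaptAux

/-- Proposition 4.7: if the mechanism is deterministic, then each finite
strategy `σ` can be simulated by a non-adaptive finite strategy of length `|range(σ)|`
(rather than `|range(σ)| × l`) with at least the same leakage. -/
theorem nonadaptive_simulates_adaptive_deterministic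
    [Fintype X] [Fintype Y] [Fintype A] [Nonempty X] [Nonempty Y] [Nonempty A]
    (M : A → X → Y → ℝ) (hM : IsMechanism M)
    (hdet : ∀ a x y, M a x y = 0 ∨ M a x y = 1)
    (U : (X → ℝ) → ℝ) (hU : IsUncertainty U)
    (p : X → ℝ) (hp : p ∈ stdSimplex ℝ X)
    (σ : List Y → Option A) (hσ : FiniteStrategy σ) :
    ∃ as : List A,
      as.length = (rangeActs σ).ncard ∧
      FiniteStrategy (ofList as : List Y → Option A) ∧
      HasLength (ofList as : List Y → Option A) ((rangeActs σ).ncard) ∧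
      leak U M σ p ≤ leak U M (ofList as : List Y → Option A) p := by
  classical
  open NonAdaptAux in
  -- extract the deterministic observation function
  have hnn : ∀ a x y, 0 ≤ M a x y := fun a x y => (hM a x).1 y
  have hrow : ∀ a x, ∑ y, M a x y = 1 := fun a x => (hM a x).2
  have hex : ∀ a x, ∃ y, M a x y = 1 := by
    intro a x
    by_contra h
    push_neg at h
    have hz : ∀ y, M a x y = 0 := fun y => (hdet a x y).resolve_right (h y)
    have := hrow a x
    simp [hz] at this
  set f : A → X → Y := fun a x => (hex a x).choose with hfdef
  have hf1 : ∀ a x, M a x (f a x) = 1 := fun a x => (hex a x).choose_spec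
  have hf : ∀ a x y, M a x y = if y = f a x then 1 else 0 := by
    intro a x y
    by_cases h : y = f a x
    · rw [if_pos h, h]; exact hf1 a x
    · rw [if_neg h]
      rcases hdet a x y with h0 | h1
      · exact h0
      · exfalso
        have h2 : (2 : ℝ) = ∑ y' ∈ ({y, f a x} : Finset Y), M a x y' := by
          rw [Finset.sum_pair h, h1, hf1]; norm_num
        have h3 : ∑ y' ∈ ({y, f a x} : Finset Y), M a x y' ≤ ∑ y', M a x y' :=
          Finset.sum_le_sum_of_subset_of_nonneg (Finset.subset_univ _)
            (fun i _ _ => hnn a x i)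
        rw [hrow a x] at h3
        linarith [h2 ▸ h3]
  -- the finite set of actions used by σ
  have hfinDom : {l : List Y | (σ l).isSome}.Finite := hσ.2.2
  have hfinRange : (rangeActs σ).Finite := by
    apply Set.Finite.subset
      (hfinDom.image fun l => (σ l).getD (Classical.arbitrary A))
    rintro a ⟨ys, hys⟩
    exact ⟨ys, by simp [hys], by simp [hys]⟩
  set R : Finset A := hfinRange.toFinset with hR
  set as : List A := R.toList with has
  have hlen : as.length = (rangeActs σ).ncard := by
    rw [has, Finset.length_toList, hR, Set.ncard_eq_toFinset_card _ hfinRange]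
  have hmemas : ∀ a, (∃ l, σ l = some a) → a ∈ as := by
    intro a ha
    rw [has, Finset.mem_toList, hR, Set.Finite.mem_toFinset]
    exact ha
  obtain ⟨a0, ha0⟩ := Option.isSome_iff_exists.1 hσ.1
  have hasne : as ≠ [] := by
    intro h
    exact absurd (hmemas a0 ⟨[], ha0⟩) (by simp [h])
  have haslen : 0 < as.length := List.length_pos_iff.2 hasne
  -- fuel bound
  obtain ⟨N₀, hN₀⟩ := (hfinDom.image List.length).bddAbove
  set N : ℕ := max (N₀ + 1) as.length with hNdef
  have hN1 : N₀ + 1 ≤ N := le_max_left _ _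
  have hN2 : as.length ≤ N := le_max_right _ _
  have HN : ∀ l : List Y, (σ l).isSome → l.length < N := by
    intro l hl
    have : l.length ≤ N₀ := hN₀ ⟨l, hl, rfl⟩
    omega
  have HN'' : ∀ l : List Y, ((ofList as : List Y → Option A) l).isSome → l.length < N := by
    intro l hl
    rw [ofList_isSome] at hl
    omega
  have h0'' : ((ofList as : List Y → Option A) ([] : List Y)).isSome := by
    rw [ofList_isSome]
    simpa using haslen
  -- traces
  set t : X → List Y := fun x => trFg σ (fun a => f a x) N [] with htdef
  set t'' : X → List Y := fun x => trFg (ofList as : List Y → Option A) (fun a => f a x) N []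
    with ht''def
  have ht'' : ∀ x, t'' x = as.map fun a => f a x := by
    intro x
    simp only [ht''def]
    rw [trFg_ofList as (fun a => f a x) N []]
    simp only [List.length_nil, List.drop_zero]
    rw [List.take_of_length_le hN2]
  have hchar : ∀ x ys, condDist M σ x ys = if ys = t x then 1 else 0 := fun x ys =>
    condDist_char M σ x f hf N HN hσ.1 ys
  have hchar'' : ∀ x ys, condDist M (ofList as : List Y → Option A) x ys
      = if ys = t'' x then 1 else 0 := fun x ys =>
    condDist_char M (ofList as : List Y → Option A) x f hf N HN'' h0'' ys
  -- the coarsening map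
  set d : Y := Classical.arbitrary Y with hd
  set g : List Y → List Y := fun zs => trFg σ (fun a => zs.getD (as.idxOf a) d) N []
    with hgdef
  have hg : ∀ x, t x = g (t'' x) := by
    intro x
    simp only [htdef, hgdef, ht'' x]
    apply trFg_congr
    rintro a ⟨l, hl⟩
    have ha : a ∈ as := hmemas a ⟨l, hl⟩
    have hidx : as.idxOf a < as.length := List.idxOf_lt_length_iff.2 ha
    have hgoal : (as.map fun a => f a x)[as.idxOf a]? = some (f a x) := by
      rw [List.getElem?_map, List.getElem?_eq_getElem hidx, List.getElem_idxOf hidx]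
      rfl
    rw [List.getD_eq_getElem?_getD, hgoal]
    rfl
  -- leakage comparison
  have hle : condUncert U M (ofList as : List Y → Option A) p ≤ condUncert U M σ p := by
    rw [condUncert_eq_sum U M σ p t hchar,
      condUncert_eq_sum U M (ofList as : List Y → Option A) p t'' hchar'']
    exact jensen_refine U hU.1 p hp t t'' g hg
  refine ⟨as, hlen, ⟨h0'', ?_, ?_⟩, ?_, ?_⟩
  · intro l l' hpre hl'
    rw [ofList_isSome] at hl' ⊢
    have := hpre.length_le
    omega
  · apply Set.Finite.subset (List.finite_length_lt Y as.length)
    intro l hl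
    rw [Set.mem_setOf_eq, ofList_isSome] at hl
    exact hl
  · constructor
    · intro ys hys
      rw [ofList_isSome] at hys
      omega
    · refine ⟨List.replicate (as.length - 1) d, ?_, ?_⟩
      · rw [ofList_isSome, List.length_replicate]
        omega
      · simp only [List.length_replicate]
        omega
  · rw [leak, leak]
    linarith

end
end

section
/- Let S be a deterministic action-based randomization mechanism with Act = {a_1,…,a_k}, U an uncertainty measure and p a prior on X. Let σ = [a_1,…,a_k] be the non-adaptive strategy that plays every action in Act exactly once. Then I_σ(S,p) = I(X;[X]); hence the maximum information flow I_⋆(S,p) equals I_σ(S,p) and is achieved by this brute-force non-adaptive strategy. -/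
open scoped BigOperators Classical

noncomputable section

variable {X Y A : Type*}

/-- indistinguishability: `x ≡ x'` iff `p_a(·|x) = p_a(·|x')` for every action `a`. -/
def mSetoid (M : A → X → Y → ℝ) : Setoid X :=
  ⟨fun x x' => ∀ a y, M a x y = M a x' y,
   ⟨fun _ _ _ => rfl, fun h a y => (h a y).symm, fun h1 h2 a y => (h1 a y).trans (h2 a y)⟩⟩

/-- `p(c)`: total prior mass of the indistinguishability class `c`. -/
def classMass [Fintype X] (M : A → X → Y → ℝ) (p : X → ℝ)
    (c : Quotient (mSetoid M)) : ℝ :=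
  ∑ x ∈ Finset.univ.filter (fun x => Quotient.mk (mSetoid M) x = c), p x

/-- `p(·|c)`: the prior conditioned on the indistinguishability class `c`. -/
def classCondDist [Fintype X] (M : A → X → Y → ℝ) (p : X → ℝ)
    (c : Quotient (mSetoid M)) : X → ℝ :=
  fun x => if Quotient.mk (mSetoid M) x = c then p x / classMass M p c else 0

/-- `U(X|[X]) = Σ_{c ∈ X/≡} p(c)·U(p(·|c))`: the uncertainty left after learning the
indistinguishability class of the secret.  The gain `I(X;[X])` is `U(p) - classUncert`. -/
def classUncert [Fintype X] (U : (X → ℝ) → ℝ) (M : A → X → Y → ℝ) (p : X → ℝ) : ℝ :=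
  ∑ c ∈ Finset.univ.image (Quotient.mk (mSetoid M)),
    classMass M p c * U (classCondDist M p c)


/-! In a deterministic mechanism the secret `x` answers each action `a` with a fixed
observation `o a x`, so a strategy `σ` produces a single observation sequence `tr x`, and
`U_σ(X|Y)` is the uncertainty `U(X | tr X)` left after revealing `tr x`. As `tr x` depends only
on the answers `o · x`, it is a function of the indistinguishability class of `x`; Jensen's
inequality on each fibre then shows that revealing the class leaves no more uncertainty than
revealing `tr x`. The brute-force strategy reveals `o a x` for every action, i.e. exactly the
class. -/

section Fibers

variable {β γ : Type*} [DecidableEq β] [DecidableEq γ] [Fintype X]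

def fiberMass (p : X → ℝ) (f : X → β) (b : β) : ℝ :=
  ∑ x ∈ Finset.univ.filter (fun x => f x = b), p x

def fiberCond (p : X → ℝ) (f : X → β) (b : β) : X → ℝ :=
  fun x => if f x = b then p x / fiberMass p f b else 0

/-- `U(X | f X)`: the expected uncertainty about the secret once `f` of it is revealed. -/
def fiberUncert (U : (X → ℝ) → ℝ) (p : X → ℝ) (f : X → β) : ℝ :=
  ∑ b ∈ Finset.univ.image f, fiberMass p f b * U (fiberCond p f b)

variable {p : X → ℝ} {f : X → β}

lemma fiberMass_nonneg (hp : ∀ x, 0 ≤ p x) (b : β) : 0 ≤ fiberMass p f b :=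
  Finset.sum_nonneg fun x _ => hp x

lemma fiberMass_smul_fiberCond (hp : ∀ x, 0 ≤ p x) (b : β) :
    fiberMass p f b • fiberCond p f b = fun x => if f x = b then p x else 0 := by
  funext x
  simp only [Pi.smul_apply, smul_eq_mul, fiberCond]
  split_ifs with hx
  · rcases eq_or_ne (fiberMass p f b) 0 with h | h
    · have hpx : p x = 0 := (Finset.sum_eq_zero_iff_of_nonneg fun x _ => hp x).mp h x
        (Finset.mem_filter.mpr ⟨Finset.mem_univ x, hx⟩)
      simp [h, hpx]
    · exact mul_div_cancel₀ _ h
  · exact mul_zero _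

lemma fiberCond_mem_stdSimplex (hp : ∀ x, 0 ≤ p x) {b : β} (hb : fiberMass p f b ≠ 0) :
    fiberCond p f b ∈ stdSimplex ℝ X := by
  refine ⟨fun x => ?_, ?_⟩
  · unfold fiberCond
    split_ifs
    exacts [div_nonneg (hp x) (fiberMass_nonneg hp b), le_rfl]
  · simp only [fiberCond]
    rw [← Finset.sum_filter, ← Finset.sum_div]
    exact div_self hb

lemma sum_ite_fiber_comp (h : β → γ) (c : γ) (x : X) (q : X → ℝ) :
    ∑ b ∈ (Finset.univ.image f).filter (fun b => h b = c), (if f x = b then q x else 0) =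
      if h (f x) = c then q x else 0 := by
  rw [Finset.sum_ite_eq]
  simp

lemma fiberMass_comp (h : β → γ) (c : γ) :
    fiberMass p (h ∘ f) c =
      ∑ b ∈ (Finset.univ.image f).filter (fun b => h b = c), fiberMass p f b := by
  simp only [fiberMass, Finset.sum_filter (s := (Finset.univ : Finset X))]
  rw [Finset.sum_comm]
  simp only [sum_ite_fiber_comp, Function.comp_apply]

/-- Jensen's inequality on one fibre of `h`: the posterior given `h (f x) = c` is the
`fiberMass`-weighted mean of the posteriors given `f x = b` over the `b` above `c`. -/
lemma sum_fiberUncert_le_comp {U : (X → ℝ) → ℝ} (hU : ConcaveOn ℝ (stdSimplex ℝ X) U)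
    (hp : ∀ x, 0 ≤ p x) (h : β → γ) (c : γ) :
    ∑ b ∈ (Finset.univ.image f).filter (fun b => h b = c),
        fiberMass p f b * U (fiberCond p f b) ≤
      fiberMass p (h ∘ f) c * U (fiberCond p (h ∘ f) c) := by
  set s := (Finset.univ.image f).filter (fun b => h b = c)
  have hmass : fiberMass p (h ∘ f) c = ∑ b ∈ s, fiberMass p f b := fiberMass_comp h c
  rcases (fiberMass_nonneg hp (f := h ∘ f) c).eq_or_lt with hzero | hpos
  · have hall : ∀ b ∈ s, fiberMass p f b = 0 :=
      (Finset.sum_eq_zero_iff_of_nonneg fun b _ => fiberMass_nonneg hp b).mp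
        (hmass ▸ hzero.symm)
    rw [← hzero, zero_mul]
    exact (Finset.sum_eq_zero fun b hb => by rw [hall b hb, zero_mul]).le
  have hmean : s.centerMass (fiberMass p f) (fiberCond p f) = fiberCond p (h ∘ f) c := by
    have hsum : ∑ b ∈ s, fiberMass p f b • fiberCond p f b =
        fiberMass p (h ∘ f) c • fiberCond p (h ∘ f) c := by
      simp only [fiberMass_smul_fiberCond hp]
      funext x
      rw [Finset.sum_apply]
      exact sum_ite_fiber_comp h c x p
    rw [Finset.centerMass, ← hmass, hsum, inv_smul_smul₀ hpos.ne']
  have hjensen := hU.le_map_centerMass (t := s.filter fun b => fiberMass p f b ≠ 0)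
    (fun b _ => fiberMass_nonneg hp b) (by rwa [Finset.sum_filter_ne_zero, ← hmass])
    (fun b hb => fiberCond_mem_stdSimplex hp (Finset.mem_filter.mp hb).2)
  rw [Finset.centerMass_filter_ne_zero, Finset.centerMass_filter_ne_zero, hmean,
    Finset.centerMass, ← hmass, smul_eq_mul] at hjensen
  simp only [Function.comp_apply, smul_eq_mul] at hjensen
  rwa [inv_mul_le_iff₀ hpos] at hjensen

lemma fiberUncert_le_comp {U : (X → ℝ) → ℝ} (hU : ConcaveOn ℝ (stdSimplex ℝ X) U)
    (hp : ∀ x, 0 ≤ p x) (h : β → γ) : fiberUncert U p f ≤ fiberUncert U p (h ∘ f) := by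
  have hmaps : ∀ b ∈ Finset.univ.image f, h b ∈ Finset.univ.image (h ∘ f) := by
    simp only [Finset.mem_image, Finset.mem_univ, true_and, Function.comp_apply]
    rintro _ ⟨x, rfl⟩
    exact ⟨x, rfl⟩
  rw [fiberUncert, ← Finset.sum_fiberwise_of_maps_to hmaps]
  exact Finset.sum_le_sum fun c _ => sum_fiberUncert_le_comp hU hp h c

lemma fiberUncert_comp_of_injective (U : (X → ℝ) → ℝ) {h : β → γ} (hh : h.Injective) :
    fiberUncert U p (h ∘ f) = fiberUncert U p f := by
  have hmass (b : β) : fiberMass p (h ∘ f) (h b) = fiberMass p f b := by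
    simp only [fiberMass, Function.comp_apply, hh.eq_iff]
  have hcond (b : β) : fiberCond p (h ∘ f) (h b) = fiberCond p f b := by
    funext x
    simp only [fiberCond, hmass, Function.comp_apply, hh.eq_iff]
  rw [fiberUncert, ← Finset.image_image, Finset.sum_image hh.injOn]
  simp only [hmass, hcond, fiberUncert]

end Fibers

section DeterministicRun

variable {σ : List Y → Option A} {obs : A → Y}

/-- The observations produced by `σ` against a secret whose answer to action `a` is `obs a`,
continuing the history `pre` for at most `n` further steps. -/
def detRun (σ : List Y → Option A) (obs : A → Y) : ℕ → List Y → List Y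
  | 0, pre => pre
  | n + 1, pre =>
    match σ pre with
    | none => pre
    | some a => detRun σ obs n (pre ++ [obs a])

lemma detRun_of_eq_none {pre : List Y} (h : σ pre = none) : ∀ n, detRun σ obs n pre = pre
  | 0 => rfl
  | n + 1 => by simp [detRun, h]

lemma prefix_detRun : ∀ (n : ℕ) (pre : List Y), pre <+: detRun σ obs n pre
  | 0, pre => List.prefix_refl pre
  | n + 1, pre => by
    cases h : σ pre with
    | none => simp [detRun, h]
    | some a =>
      simpa [detRun, h] using (List.prefix_append pre [obs a]).trans (prefix_detRun n _)

lemma detRun_eq_none {N : ℕ} (hN : ∀ ys, (σ ys).isSome → ys.length + 1 ≤ N) :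
    ∀ (n : ℕ) (pre : List Y), N ≤ pre.length + n → σ (detRun σ obs n pre) = none
  | 0, pre, hn => by
    by_contra hne
    have := hN pre (Option.ne_none_iff_isSome.mp hne)
    omega
  | n + 1, pre, hn => by
    cases h : σ pre with
    | none => simp [detRun, h]
    | some a =>
      simp only [detRun, h]
      exact detRun_eq_none hN n _ (by simp; omega)

lemma isSome_dropLast_detRun :
    ∀ (n : ℕ) (pre : List Y), (σ pre).isSome → σ (detRun σ obs n pre) = none →
      (σ (detRun σ obs n pre).dropLast).isSome
  | 0, pre, hs, hn => by simp_all [detRun]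
  | n + 1, pre, hs, hn => by
    obtain ⟨a, ha⟩ := Option.isSome_iff_exists.mp hs
    simp only [detRun, ha] at hn ⊢
    cases h : σ (pre ++ [obs a]) with
    | none => simpa [detRun_of_eq_none h] using hs
    | some b => exact isSome_dropLast_detRun n _ (by simp [h]) hn

lemma detRun_ofList {as : List A} :
    ∀ (n : ℕ) (pre : List Y), as.length ≤ pre.length + n →
      detRun (ofList as) obs n pre = pre ++ (as.drop pre.length).map obs
  | 0, pre, hn => by simp [detRun, List.drop_eq_nil_of_le (by omega : as.length ≤ pre.length)]
  | n + 1, pre, hn => by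
    by_cases hlt : pre.length < as.length
    · have hpre : ofList as pre = some as[pre.length] := List.getElem?_eq_getElem hlt
      simp only [detRun, hpre]
      rw [detRun_ofList n _ (by simp; omega), List.drop_eq_getElem_cons hlt]
      simp only [List.length_append, List.length_singleton, List.map_cons, List.append_assoc,
        List.singleton_append]
    · have hpre : ofList as pre = none := List.getElem?_eq_none (by omega)
      simp [detRun_of_eq_none hpre, List.drop_eq_nil_of_le (by omega : as.length ≤ pre.length)]

end DeterministicRun

section DeterministicLikelihood

variable {M : A → X → Y → ℝ} {σ : List Y → Option A} {x : X} {obs : A → Y}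

lemma likAux_detRun (hrow : ∀ a y, M a x y = if y = obs a then 1 else 0) :
    ∀ (n : ℕ) (pre suf : List Y), detRun σ obs n pre = pre ++ suf → likAux M σ x pre suf = 1
  | 0, pre, suf, h => by
    obtain rfl : suf = [] := by simpa [detRun] using h
    rfl
  | n + 1, pre, suf, h => by
    cases hpre : σ pre with
    | none =>
      obtain rfl : suf = [] := by simpa [detRun, hpre] using h
      rfl
    | some a =>
      simp only [detRun, hpre] at h
      obtain ⟨suf', hsuf'⟩ := prefix_detRun (σ := σ) (obs := obs) n (pre ++ [obs a])
      obtain rfl : suf = obs a :: suf' := by rw [h] at hsuf'; simpa using hsuf'.symm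
      simp [likAux, hpre, hrow, likAux_detRun hrow n _ suf' hsuf'.symm]

lemma detRun_eq_of_likAux_ne_zero (hrow : ∀ a y, M a x y = if y = obs a then 1 else 0) :
    ∀ (ys pre : List Y) (n : ℕ), likAux M σ x pre ys ≠ 0 → σ (pre ++ ys) = none →
      ys.length ≤ n → detRun σ obs n pre = pre ++ ys
  | [], pre, n, _, hnone, _ => by
    simpa using detRun_of_eq_none (by simpa using hnone) n
  | y :: ys, pre, n, hne, hnone, hlen => by
    obtain ⟨m, rfl⟩ : ∃ m, n = m + 1 := Nat.exists_eq_add_one.mpr (by simp at hlen; omega)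
    rw [likAux, mul_ne_zero_iff] at hne
    cases hpre : σ pre with
    | none => simp [hpre] at hne
    | some a =>
      obtain rfl : y = obs a := by
        by_contra hy
        simp [hpre, hrow, hy] at hne
      simp only [detRun, hpre]
      rw [detRun_eq_of_likAux_ne_zero hrow ys _ m hne.2 (by simpa using hnone)
        (by simpa using hlen)]
      simp

lemma condDist_eq_ite (hrow : ∀ a y, M a x y = if y = obs a then 1 else 0)
    (h0 : (σ []).isSome) {N : ℕ} (hN : ∀ ys, (σ ys).isSome → ys.length + 1 ≤ N)
    (ys : List Y) : condDist M σ x ys = if detRun σ obs N [] = ys then 1 else 0 := by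
  have hnone : σ (detRun σ obs N []) = none := detRun_eq_none hN N [] (by simp)
  split_ifs with hrun
  · subst hrun
    have hne : detRun σ obs N [] ≠ [] := by
      intro h
      simp_all
    rw [condDist, if_pos ⟨hne, isSome_dropLast_detRun N [] h0 hnone, hnone⟩]
    exact likAux_detRun hrow N [] _ (List.nil_append _).symm
  · rw [condDist, ite_eq_right_iff]
    rintro ⟨hne, hdrop, hstop⟩
    by_contra hlik
    have hlen : ys.length ≤ N := by
      have := hN _ hdrop
      rw [List.length_dropLast] at this
      have := List.length_pos_iff.mpr hne
      omega
    have hrun' := detRun_eq_of_likAux_ne_zero hrow ys [] N hlik (by simpa using hstop) hlen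
    exact hrun (by simpa using hrun')

end DeterministicLikelihood

lemma exists_eq_ite_of_mem_stdSimplex [Fintype Y] {q : Y → ℝ} (hq : q ∈ stdSimplex ℝ Y)
    (h01 : ∀ y, q y = 0 ∨ q y = 1) : ∃ y₀, ∀ y, q y = if y = y₀ then 1 else 0 := by
  have hcard : ((Finset.univ.filter fun y => q y = 1).card : ℝ) = 1 := by
    rw [Finset.natCast_card_filter]
    calc _ = ∑ y, q y := Finset.sum_congr rfl fun y _ => by rcases h01 y with h | h <;> simp [h]
      _ = 1 := hq.2
  obtain ⟨y₀, hy₀⟩ := Finset.card_eq_one.mp (by exact_mod_cast hcard)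
  refine ⟨y₀, fun y => ?_⟩
  have hmem : q y = 1 ↔ y = y₀ := by
    simpa using congrArg (y ∈ ·) hy₀
  rcases h01 y with h | h
  · rw [if_neg fun hy => absurd (hmem.mpr hy) (by simp [h]), h]
  · rw [if_pos (hmem.mp h), h]

lemma condUncert_eq_fiberUncert [Fintype X] (U : (X → ℝ) → ℝ) {M : A → X → Y → ℝ}
    {σ : List Y → Option A} {p : X → ℝ} {tr : X → List Y}
    (htr : ∀ x ys, condDist M σ x ys = if tr x = ys then 1 else 0) :
    condUncert U M σ p = fiberUncert U p tr := by
  have hmass (ys : List Y) : obsProb M σ p ys = fiberMass p tr ys := by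
    simp only [obsProb, joint, htr, mul_ite, mul_one, mul_zero, fiberMass, Finset.sum_filter]
  have hpost (ys : List Y) : post M σ p ys = fiberCond p tr ys := by
    funext x
    simp only [post, joint, htr, mul_ite, mul_one, mul_zero, hmass, fiberCond, ite_div, zero_div]
  rw [condUncert, fiberUncert]
  simp only [hmass, hpost]
  refine tsum_eq_sum fun ys hys => ?_
  have hempty : Finset.univ.filter (fun x => tr x = ys) = ∅ :=
    Finset.filter_eq_empty_iff.mpr fun x _ hx =>
      hys (hx ▸ Finset.mem_image_of_mem tr (Finset.mem_univ x))
  simp [fiberMass, hempty]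

lemma classUncert_eq_fiberUncert [Fintype X] (U : (X → ℝ) → ℝ) (M : A → X → Y → ℝ)
    (p : X → ℝ) : classUncert U M p = fiberUncert U p (Quotient.mk (mSetoid M)) :=
  rfl

section Deterministic

variable {M : A → X → Y → ℝ} {o : A → X → Y}

lemma mSetoid_iff (ho : ∀ a x y, M a x y = if y = o a x then 1 else 0) {x x' : X} :
    mSetoid M x x' ↔ ∀ a, o a x = o a x' := by
  refine ⟨fun h a => ?_, fun h a y => by simp only [ho, h]⟩
  by_contra hne
  have := (show ∀ a y, M a x y = M a x' y from h) a (o a x)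
  simp [ho, hne] at this

lemma classUncert_le_condUncert [Fintype X] (ho : ∀ a x y, M a x y = if y = o a x then 1 else 0)
    {U : (X → ℝ) → ℝ} (hU : ConcaveOn ℝ (stdSimplex ℝ X) U) {p : X → ℝ} (hp : ∀ x, 0 ≤ p x)
    {σ : List Y → Option A} (h0 : (σ []).isSome) {N : ℕ}
    (hN : ∀ ys, (σ ys).isSome → ys.length + 1 ≤ N) :
    classUncert U M p ≤ condUncert U M σ p := by
  set tr : X → List Y := fun x => detRun σ (o · x) N []
  have hresp (x x' : X) (h : mSetoid M x x') : tr x = tr x' := by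
    simp only [tr, funext ((mSetoid_iff ho).mp h)]
  rw [condUncert_eq_fiberUncert U (tr := tr) fun x => condDist_eq_ite (ho · x) h0 hN,
    ← Quotient.lift_comp_mk tr hresp, classUncert_eq_fiberUncert]
  exact fiberUncert_le_comp hU hp _

lemma condUncert_ofList_eq_classUncert [Fintype X]
    (ho : ∀ a x y, M a x y = if y = o a x then 1 else 0) (U : (X → ℝ) → ℝ) (p : X → ℝ) {as : List A} (hne : as ≠ []) (hall : ∀ a, a ∈ as) :
    condUncert U M (ofList as) p = classUncert U M p := by
  set tr : X → List Y := fun x => as.map (o · x)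
  have h0 : (ofList as ([] : List Y)).isSome := by simpa [ofList, List.length_pos_iff] using hne
  have hN (ys : List Y) (h : (ofList as ys).isSome) : ys.length + 1 ≤ as.length := by
    simp [ofList] at h
    omega
  have htr (x : X) (ys : List Y) : condDist M (ofList as) x ys = if tr x = ys then 1 else 0 := by
    rw [condDist_eq_ite (ho · x) h0 hN, detRun_ofList as.length [] (by simp)]
    simp [tr]
  have hresp (x x' : X) (h : mSetoid M x x') : tr x = tr x' := by
    simp only [tr, funext ((mSetoid_iff ho).mp h)]
  have hinj : (Quotient.lift tr hresp).Injective := by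
    intro c c'
    induction c using Quotient.inductionOn
    induction c' using Quotient.inductionOn
    intro h
    exact Quotient.sound ((mSetoid_iff ho).mpr fun a => List.map_inj_left.mp h a (hall a))
  rw [condUncert_eq_fiberUncert U (tr := tr) htr, ← Quotient.lift_comp_mk tr hresp,
    fiberUncert_comp_of_injective U hinj, classUncert_eq_fiberUncert]

end Deterministic

theorem deterministic_bruteforce_achieves_max_general
    [Fintype X] [Fintype Y] [Nonempty A]
    (M : A → X → Y → ℝ) (hM : IsMechanism M)
    (hdet : ∀ a x y, M a x y = 0 ∨ M a x y = 1)
    (U : (X → ℝ) → ℝ) (hU : IsUncertainty U)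
    (p : X → ℝ) (hp : p ∈ stdSimplex ℝ X)
    (as : List A) (hall : ∀ a : A, a ∈ as) :
    leak U M (ofList as : List Y → Option A) p = U p - classUncert U M p ∧
      ∀ σ : List Y → Option A, FiniteStrategy σ →
        leak U M σ p ≤ leak U M (ofList as : List Y → Option A) p := by
  choose o ho using fun a x => exists_eq_ite_of_mem_stdSimplex (hM a x) (hdet a x)
  have hbrute := condUncert_ofList_eq_classUncert ho U p
    (List.ne_nil_of_mem (hall (Classical.arbitrary A))) hall
  refine ⟨by rw [leak, hbrute], fun σ ⟨h0, _, hfin⟩ => ?_⟩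
  obtain ⟨B, hB⟩ := (hfin.image List.length).bddAbove
  have hle := classUncert_le_condUncert ho hU.1 hp.1 h0 (N := B + 1)
    fun ys h => Nat.succ_le_succ (hB ⟨ys, h, rfl⟩)
  rw [leak, leak, hbrute]
  linarith

/-- Proposition 5.4: if `S` is deterministic and `σ = [a_1,…,a_k]` is the
non-adaptive strategy playing every action of `Act` exactly once, then
`I_σ(S,p) = I(X;[X])`; hence `σ` achieves the maximum information flow,
i.e. `I_σ'(S,p) ≤ I_σ(S,p)` for every finite strategy `σ'`. -/
theorem deterministic_bruteforce_achieves_max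
    [Fintype X] [Fintype Y] [Fintype A] [Nonempty X] [Nonempty Y] [Nonempty A]
    (M : A → X → Y → ℝ) (hM : IsMechanism M)
    (hdet : ∀ a x y, M a x y = 0 ∨ M a x y = 1)
    (U : (X → ℝ) → ℝ) (hU : IsUncertainty U)
    (p : X → ℝ) (hp : p ∈ stdSimplex ℝ X)
    (as : List A) (hnodup : as.Nodup) (hall : ∀ a : A, a ∈ as) :
    leak U M (ofList as : List Y → Option A) p = U p - classUncert U M p ∧
      ∀ σ : List Y → Option A, FiniteStrategy σ →
        leak U M σ p ≤ leak U M (ofList as : List Y → Option A) p :=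
  deterministic_bruteforce_achieves_max_general M hM hdet U hU p hp as hall

end
end

section
/- Let S be an action-based randomization mechanism, U an uncertainty measure and p a prior on X. Let σ be a finite strategy with σ(ε) = a. Then the leakage decomposes as I_σ(S,p) = I_{[a]}(S,p) + Σ_{y : p_a(y)>0} p_a(y) · I_{σ_y}(S, p^{ay}), where σ_y is the y-derivative of σ, p_a(y) = Σ_x p(x)p_a(y|x), and p^{ay} is the Bayesian posterior p^{ay}(x) = p(x)p_a(y|x)/p_a(y). -/
open scoped BigOperators Classical

noncomputable section

variable {X Y A : Type*}

/-- the `y`-derivative `σ_y` of a strategy. -/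
def sderiv (σ : List Y → Option A) (y : Y) : List Y → Option A :=
  fun ys => σ (y :: ys)

/-- `p_a(y) = Σ_x p(x)·p_a(y|x)`: probability of observing `y` when playing `a`. -/
def actObs [Fintype X] (M : A → X → Y → ℝ) (p : X → ℝ) (a : A) (y : Y) : ℝ :=
  ∑ x : X, p x * M a x y

/-- `p^{ay}`: the Bayesian posterior after playing `a` and observing `y`. -/
def bayes [Fintype X] (M : A → X → Y → ℝ) (p : X → ℝ) (a : A) (y : Y) : X → ℝ :=
  fun x => p x * M a x y / actObs M p a y

section Proofs

lemma likAux_shift (M : A → X → Y → ℝ) (σ : List Y → Option A) (x : X) (y : Y) :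
    ∀ (ys pre : List Y), likAux M σ x (y :: pre) ys = likAux M (sderiv σ y) x pre ys
  | [], _ => rfl
  | y' :: ys, pre => by
    show ((σ (y :: pre)).elim 0 fun a => M a x y') * likAux M σ x ((y :: pre) ++ [y']) ys
        = ((σ (y :: pre)).elim 0 fun a => M a x y') * likAux M (sderiv σ y) x (pre ++ [y']) ys
    rw [List.cons_append, likAux_shift M σ x y ys (pre ++ [y'])]

lemma condDist_single (M : A → X → Y → ℝ) {σ : List Y → Option A} {a : A}
    (ha : σ [] = some a) (x : X) (y : Y) :
    condDist M σ x [y] = if σ [y] = none then M a x y else 0 := by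
  simp [condDist, likAux, ha]

lemma condDist_cons (M : A → X → Y → ℝ) {σ : List Y → Option A} {a : A}
    (ha : σ [] = some a) (x : X) (y : Y) {ys : List Y} (hys : ys ≠ []) :
    condDist M σ x (y :: ys) = M a x y * condDist M (sderiv σ y) x ys := by
  have hdl : (y :: ys).dropLast = y :: ys.dropLast := List.dropLast_cons_of_ne_nil hys
  have hlik : likAux M σ x [] (y :: ys) = M a x y * likAux M (sderiv σ y) x [] ys := by
    show ((σ []).elim 0 fun a' => M a' x y) * likAux M σ x ([] ++ [y]) ys = _
    rw [ha]
    show M a x y * likAux M σ x [y] ys = _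
    rw [likAux_shift M σ x y ys []]
  unfold condDist
  rw [hdl]
  by_cases h : (σ (y :: ys.dropLast)).isSome ∧ σ (y :: ys) = none
  · rw [if_pos ⟨List.cons_ne_nil _ _, h.1, h.2⟩, if_pos ⟨hys, h.1, h.2⟩, hlik]
  · rw [if_neg (by tauto), if_neg (by tauto), mul_zero]

end Proofs


/-- Lemma 6.1: if `σ` is a finite strategy with `σ(ε) = a`, then
`I_σ(S,p) = I_{[a]}(S,p) + Σ_{y} p_a(y)·I_{σ_y}(S,p^{ay})`, where the leakage of an
empty derivative strategy is `0` by convention (terms with `p_a(y) = 0` vanish). -/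
theorem leak_decomposition
    [Fintype X] [Fintype Y] [Fintype A] [Nonempty X] [Nonempty Y] [Nonempty A]
    (M : A → X → Y → ℝ) (hM : IsMechanism M)
    (U : (X → ℝ) → ℝ) (hU : IsUncertainty U)
    (p : X → ℝ) (hp : p ∈ stdSimplex ℝ X)
    (σ : List Y → Option A) (hσ : FiniteStrategy σ)
    (a : A) (ha : σ [] = some a) :
    leak U M σ p =
      leak U M (ofList [a] : List Y → Option A) p +
        ∑ y : Y, actObs M p a y *
          (if (σ [y]).isSome then leak U M (sderiv σ y) (bayes M p a y) else 0) := by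
  classical
  obtain ⟨hroot, hpc, hfin⟩ := hσ
  -- key pointwise identity, using nonnegativity
  have key : ∀ (y : Y) (x : X), p x * M a x y = actObs M p a y * bayes M p a y x := by
    intro y x
    by_cases hA : actObs M p a y = 0
    · have h0 : p x * M a x y = 0 := by
        have hnn : ∀ x' ∈ Finset.univ, (0:ℝ) ≤ p x' * M a x' y :=
          fun x' _ => mul_nonneg (hp.1 x') ((hM a x').1 y)
        exact (Finset.sum_eq_zero_iff_of_nonneg hnn).1 hA x (Finset.mem_univ x)
      rw [h0, hA, zero_mul]
    · show p x * M a x y = actObs M p a y * (p x * M a x y / actObs M p a y)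
      rw [mul_comm (actObs M p a y), div_mul_cancel₀ _ hA]
  -- generic vanishing of obsProb
  have obsZero : ∀ (τ : List Y → Option A) (p' : X → ℝ) (ys : List Y),
      ¬(ys ≠ [] ∧ (τ ys.dropLast).isSome ∧ τ ys = none) → obsProb M τ p' ys = 0 := by
    intro τ p' ys h
    have hc : ∀ x, condDist M τ x ys = 0 := fun x => if_neg h
    simp [obsProb, joint, hc]
  have hofl0 : (ofList [a] : List Y → Option A) [] = some a := rfl
  have hofl : ∀ ys : List Y, ys ≠ [] → (ofList [a] : List Y → Option A) ys = none := by
    intro ys h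
    have h1 : 1 ≤ ys.length := List.length_pos_iff.2 h
    have h2 : ([a] : List A)[ys.length]? = none := List.getElem?_eq_none (by simpa using h1)
    simpa [ofList] using h2
  -- conditional uncertainty of the one-step strategy
  have hCU1 : condUncert U M (ofList [a] : List Y → Option A) p
      = ∑ y : Y, actObs M p a y * U (bayes M p a y) := by
    have hcd : ∀ (x : X) (y : Y), condDist M (ofList [a] : List Y → Option A) x [y] = M a x y := by
      intro x y
      rw [condDist_single M hofl0 x y, if_pos (hofl [y] (by simp))]
    have hobs : ∀ y : Y, obsProb M (ofList [a] : List Y → Option A) p [y] = actObs M p a y := by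
      intro y; simp [obsProb, joint, actObs, hcd]
    have hpost : ∀ y : Y, post M (ofList [a] : List Y → Option A) p [y] = bayes M p a y := by
      intro y; funext x; simp [post, joint, bayes, hcd, hobs y]
    rw [condUncert, tsum_eq_sum (s := Finset.univ.image fun y : Y => [y]) ?_]
    · rw [Finset.sum_image (by intro x _ y _ h; simpa using h)]
      exact Finset.sum_congr rfl fun y _ => by rw [hobs y, hpost y]
    · intro ys hys
      rcases Classical.em (ys ≠ [] ∧ ((ofList [a] : List Y → Option A) ys.dropLast).isSome ∧
          (ofList [a] : List Y → Option A) ys = none) with h | h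
      · obtain ⟨h1, h2, -⟩ := h
        have hdl : ys.dropLast = [] := by
          by_contra hd
          rw [hofl _ hd] at h2; simp at h2
        have hys1 : ys = [ys.getLast h1] := by
          conv_lhs => rw [← List.dropLast_append_getLast h1]
          rw [hdl]; rfl
        exact absurd (Finset.mem_image.2 ⟨ys.getLast h1, Finset.mem_univ _, hys1.symm⟩) hys
      · rw [obsZero _ _ _ h, zero_mul]
  -- support finsets
  set D : Finset (List Y) := hfin.toFinset with hD
  set s : Finset (List Y) := (D ×ˢ (Finset.univ : Finset Y)).image (fun q => q.1 ++ [q.2]) with hs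
  set t : Finset (List Y) := insert [] (s.image List.tail) with ht
  have hmem_s : ∀ (ys : List Y) (hne : ys ≠ []), (σ ys.dropLast).isSome → ys ∈ s := by
    intro ys hne h2
    exact Finset.mem_image.2 ⟨(ys.dropLast, ys.getLast hne),
      Finset.mem_product.2 ⟨hfin.mem_toFinset.2 h2, Finset.mem_univ _⟩,
      List.dropLast_append_getLast hne⟩
  have hg_supp : ∀ (y : Y) (p' : X → ℝ) (ys' : List Y), ys' ∉ t →
      obsProb M (sderiv σ y) p' ys' = 0 := by
    intro y p' ys' hys'
    apply obsZero
    rintro ⟨h1, h2, -⟩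
    have h2' : (σ (y :: ys').dropLast).isSome := by
      rwa [List.dropLast_cons_of_ne_nil h1]
    have hmem : (y :: ys') ∈ s := hmem_s (y :: ys') (List.cons_ne_nil _ _) h2'
    exact hys' (Finset.mem_insert.2 (Or.inr (Finset.mem_image.2 ⟨y :: ys', hmem, rfl⟩)))
  -- split the conditional uncertainty of σ
  have cons_inj : ∀ x₁ ∈ (Finset.univ : Finset Y) ×ˢ t, ∀ x₂ ∈ (Finset.univ : Finset Y) ×ˢ t,
      (fun q : Y × List Y => q.1 :: q.2) x₁ = (fun q : Y × List Y => q.1 :: q.2) x₂ → x₁ = x₂ := by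
    intro x₁ _ x₂ _ h
    cases x₁; cases x₂
    simpa [Prod.ext_iff] using h
  have hCUσ : condUncert U M σ p
      = ∑ y : Y, ∑ ys' ∈ t, obsProb M σ p (y :: ys') * U (post M σ p (y :: ys')) := by
    rw [condUncert, tsum_eq_sum (s := insert ([] : List Y)
      (((Finset.univ : Finset Y) ×ˢ t).image fun q : Y × List Y => q.1 :: q.2)) ?_]
    · rw [Finset.sum_insert (by
        simp only [Finset.mem_image]
        rintro ⟨q, -, hq⟩
        exact List.cons_ne_nil _ _ hq)]
      rw [Finset.sum_image cons_inj, Finset.sum_product]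
      have h0 : obsProb M σ p [] = 0 := obsZero σ p [] (by simp)
      rw [h0, zero_mul, zero_add]
    · intro ys hys
      rcases Classical.em (ys ≠ [] ∧ (σ ys.dropLast).isSome ∧ σ ys = none) with h | h
      · obtain ⟨h1, h2, -⟩ := h
        have hmem := hmem_s ys h1 h2
        obtain ⟨y, ys', rfl⟩ := List.exists_cons_of_ne_nil h1
        have hmt : ys' ∈ t := Finset.mem_insert.2 (Or.inr (Finset.mem_image.2 ⟨y :: ys', hmem, rfl⟩))
        exact absurd (Finset.mem_insert.2 (Or.inr (Finset.mem_image.2 ⟨(y, ys'),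
          Finset.mem_product.2 ⟨Finset.mem_univ _, hmt⟩, rfl⟩))) hys
      · rw [obsZero σ p ys h, zero_mul]
  -- step relations
  have hjoint : ∀ (y : Y) (ys' : List Y), ys' ≠ [] → ∀ x,
      joint M σ p x (y :: ys') = actObs M p a y * joint M (sderiv σ y) (bayes M p a y) x ys' := by
    intro y ys' h1 x
    rw [joint, condDist_cons M ha x y h1, ← mul_assoc, key y x, joint]
    ring
  have hobs_cons : ∀ (y : Y) (ys' : List Y), ys' ≠ [] →
      obsProb M σ p (y :: ys') = actObs M p a y * obsProb M (sderiv σ y) (bayes M p a y) ys' := by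
    intro y ys' h1
    rw [obsProb, obsProb, Finset.mul_sum]
    exact Finset.sum_congr rfl fun x _ => hjoint y ys' h1 x
  have hpost_cons : ∀ (y : Y) (ys' : List Y), ys' ≠ [] →
      post M σ p (y :: ys') = post M (sderiv σ y) (bayes M p a y) ys' := by
    intro y ys' h1
    funext x
    rw [post, post, hjoint y ys' h1 x, hobs_cons y ys' h1]
    by_cases hA : actObs M p a y = 0
    · have hb : bayes M p a y x = 0 := by simp [bayes, hA]
      rw [hA, zero_mul, zero_mul, joint, hb, zero_mul, zero_div, zero_div]
    · exact mul_div_mul_left _ _ hA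
  have hterm_cons : ∀ (y : Y) (ys' : List Y), ys' ≠ [] →
      obsProb M σ p (y :: ys') * U (post M σ p (y :: ys'))
        = actObs M p a y * (obsProb M (sderiv σ y) (bayes M p a y) ys'
            * U (post M (sderiv σ y) (bayes M p a y) ys')) := by
    intro y ys' h1
    rw [hobs_cons y ys' h1, hpost_cons y ys' h1, mul_assoc]
  -- the single-observation terms
  have hobs_single : ∀ y : Y, σ [y] = none → obsProb M σ p [y] = actObs M p a y := by
    intro y hy
    have hc : ∀ x, condDist M σ x [y] = M a x y := fun x => by
      rw [condDist_single M ha x y, if_pos hy]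
    simp [obsProb, joint, actObs, hc]
  have hpost_single : ∀ y : Y, σ [y] = none → post M σ p [y] = bayes M p a y := by
    intro y hy
    funext x
    have hc : condDist M σ x [y] = M a x y := by rw [condDist_single M ha x y, if_pos hy]
    simp [post, joint, bayes, hc, hobs_single y hy]
  -- per-observation sums
  have hsum_y : ∀ y : Y, (∑ ys' ∈ t, obsProb M σ p (y :: ys') * U (post M σ p (y :: ys')))
      = actObs M p a y * (if (σ [y]).isSome then condUncert U M (sderiv σ y) (bayes M p a y)
          else U (bayes M p a y)) := by
    intro y
    by_cases hy : (σ [y]).isSome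
    · rw [if_pos hy]
      have hCU : condUncert U M (sderiv σ y) (bayes M p a y)
          = ∑ ys' ∈ t, obsProb M (sderiv σ y) (bayes M p a y) ys'
              * U (post M (sderiv σ y) (bayes M p a y) ys') :=
        tsum_eq_sum fun ys' hys' => by rw [hg_supp y _ ys' hys', zero_mul]
      rw [hCU, Finset.mul_sum]
      refine Finset.sum_congr rfl fun ys' _ => ?_
      by_cases h1 : ys' = []
      · subst h1
        have h2 : obsProb M σ p [y] = 0 := obsZero σ p [y] (by
          rintro ⟨-, -, h3⟩; rw [h3] at hy; simp at hy)
        have h3 : obsProb M (sderiv σ y) (bayes M p a y) [] = 0 := obsZero _ _ [] (by simp)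
        rw [h2, h3, zero_mul, zero_mul, mul_zero]
      · exact hterm_cons y ys' h1
    · rw [if_neg hy]
      have hnone : σ [y] = none := Option.not_isSome_iff_eq_none.1 hy
      rw [Finset.sum_eq_single_of_mem ([] : List Y) (Finset.mem_insert_self _ _) ?_]
      · rw [hobs_single y hnone, hpost_single y hnone]
      · intro ys' _ h1
        have h0 : obsProb M σ p (y :: ys') = 0 := obsZero σ p (y :: ys') (by
          rintro ⟨-, h2, -⟩
          rw [List.dropLast_cons_of_ne_nil h1] at h2
          have := hpc [y] (y :: ys'.dropLast) ⟨ys'.dropLast, rfl⟩ h2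
          rw [hnone] at this
          simp at this)
        rw [h0, zero_mul]
  -- put everything together
  simp only [leak]
  rw [hCUσ, hCU1, Finset.sum_congr rfl fun y _ => hsum_y y]
  have hstep : ∀ y : Y, actObs M p a y * (if (σ [y]).isSome
        then condUncert U M (sderiv σ y) (bayes M p a y) else U (bayes M p a y))
      = actObs M p a y * U (bayes M p a y) - actObs M p a y * (if (σ [y]).isSome
        then U (bayes M p a y) - condUncert U M (sderiv σ y) (bayes M p a y) else 0) := by
    intro y
    by_cases h : (σ [y]).isSome <;> simp [h] <;> ring
  rw [Finset.sum_congr rfl fun y _ => hstep y, Finset.sum_sub_distrib]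
  ring

end
end

section
/- Let S be an action-based randomization mechanism with Act = {a_1,…,a_k}, σ the lock-step non-adaptive strategy and σ_n its truncation at level n, with n a multiple of k. Fix x ∈ X and ε > 0, and let 𝒰^{(n)}(x,ε) = { y^n ∈ Y^n : D(t_{y^n(i)} ‖ p_{a_i}(·|x)) ≤ ε for all i = 1,…,k }. Then p_{σ_n}(𝒰^{(n)}(x,ε) | x) ≥ 1 − 2^{−(n/k)ε}·(n/k + 1)^{k|Y|}·C, where C = k·max_{1≤i≤k} binom(k,i) is a constant not depending on n. -/
open scoped BigOperators Classical

noncomputable section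

variable {X Y A : Type*}

/-- `p_{σ_n}(ys|x)` for the lock-step strategy playing `a 0, …, a (k-1)` cyclically:
the product `∏_j p_{a_{(j mod k)}}(y_j | x)`, where `j` starts from the given counter. -/
def cycLik (M : A → X → Y → ℝ) {k : ℕ} (hk : 0 < k) (a : Fin k → A) (x : X) :
    ℕ → List Y → ℝ
  | _, [] => 1
  | j, y :: ys => M (a ⟨j % k, Nat.mod_lt _ hk⟩) x y * cycLik M hk a x (j + 1) ys

/-- `ys(i)`: the subsequence of the symbols of `ys` at (0-based) positions congruent to
`i` modulo `k`. -/
def subseqMod (k i : ℕ) (ys : List Y) : List Y :=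
  (((List.range ys.length).zip ys).filter (fun q => q.1 % k == i)).map Prod.snd

/-- the type (empirical distribution) of a finite sequence of observations. -/
def typeOf [DecidableEq Y] (w : List Y) : Y → ℝ :=
  fun y => (w.count y : ℝ) / (w.length : ℝ)

/-- Shannon entropy (in bits). -/
def shannonH {Z : Type*} [Fintype Z] (q : Z → ℝ) : ℝ :=
  -∑ z : Z, q z * Real.logb 2 (q z)

/-- Kullback–Leibler divergence `D(q‖r)` (base 2), valued in `EReal`, with the
conventions `0·log(0/r) = 0` and `q(y)·log(q(y)/0) = +∞` for `q(y) > 0`. -/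
def klD [Fintype Y] (q r : Y → ℝ) : EReal :=
  ∑ y : Y, if q y = 0 then (0 : EReal)
    else if r y = 0 then (⊤ : EReal)
    else ((q y * Real.logb 2 (q y / r y) : ℝ) : EReal)

/-!
Along the lock-step strategy the symbols at positions `≡ i (mod k)` are i.i.d. with law
`p_i = p_{a_i}(·|x)` and the `k` residue classes are independent, so with `m = n / k` the
probability of `𝒰^{(n)}(x, ε)` factorizes as `∏ i, P_i`, where `P_i` is the probability that `m`
i.i.d. draws from `p_i` have a type `q` with `D(q‖p_i) ≤ ε`.

Method of types: a sequence `w` of type `q` has `p^m(w) = q^m(w) · 2^{-m D(q‖p)}`, and the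
`q^m`-mass of the type class of `q` is at most `1`. There are at most `(m+1)^{|Y|}` types, hence
`1 - P_i ≤ (m+1)^{|Y|} 2^{-mε}`. Finally `∏ P_i ≥ 1 - ∑ (1 - P_i)`.
-/

def finModDivEquiv (k m : ℕ) : Fin k × Fin m ≃ Fin (k * m) :=
  (Equiv.prodComm _ _).trans (finProdFinEquiv.trans (finCongr (Nat.mul_comm m k)))

@[simp]
lemma finModDivEquiv_apply_val {k m : ℕ} (i : Fin k) (t : Fin m) :
    (finModDivEquiv k m (i, t) : ℕ) = i + k * t := rfl

lemma sum_comp_finModDivEquiv [Fintype Y] {β : Type*} [AddCommMonoid β] (k m : ℕ)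
    (F : (Fin k → Fin m → Y) → β) :
    ∑ g : Fin (k * m) → Y, F (fun i t => g (finModDivEquiv k m (i, t))) = ∑ V, F V :=
  Equiv.sum_comp (((finModDivEquiv k m).arrowCongr (Equiv.refl Y)).symm.trans
    (Equiv.curry _ _ _)) F

lemma tsum_ite_length_eq_sum_ofFn [Fintype Y] {β : Type*} [AddCommMonoid β] [TopologicalSpace β]
    (n : ℕ) (f : List Y → β) :
    ∑' l : List Y, (if l.length = n then f l else 0) = ∑ g : Fin n → Y, f (List.ofFn g) := by
  rw [← (List.ofFn_injective (n := n)).tsum_eq, tsum_fintype]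
  · simp
  · intro l hl
    obtain rfl : l.length = n := by_contra fun h => hl (if_neg h)
    exact ⟨_, List.ofFn_getElem⟩

lemma filter_range_mul_mod_eq {k i : ℕ} (hi : i < k) (m : ℕ) :
    (List.range (k * m)).filter (fun j => j % k == i) = (List.range m).map (i + k * ·) := by
  induction m with
  | zero => simp
  | succ m ih =>
    have hblock : (List.range k).filter (fun j => (k * m + j) % k == i) = [i] := by
      rw [List.filter_congr (q := (· == i)) fun j hj => by
        rw [Nat.mul_add_mod, Nat.mod_eq_of_lt (List.mem_range.mp hj)], List.filter_beq,
        List.count_range, if_pos hi, List.replicate_one]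
    rw [Nat.mul_succ, List.range_add, List.filter_append, ih, List.filter_map,
      Function.comp_def, hblock, List.range_succ, List.map_append]
    simp [Nat.add_comm]

lemma range_zip_ofFn {n : ℕ} (g : Fin n → Y) :
    (List.range n).zip (List.ofFn g) = List.ofFn (fun j => ((j : ℕ), g j)) := by
  apply List.ext_getElem <;> simp

lemma subseqMod_ofFn {k m : ℕ} (g : Fin (k * m) → Y) (i : Fin k) :
    subseqMod k i (List.ofFn g) = List.ofFn (fun t => g (finModDivEquiv k m (i, t))) := by
  have hval (n : ℕ) : (List.finRange n).map Fin.val = List.range n :=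
    List.ext_getElem (by simp) (by simp)
  have hidx : (List.finRange (k * m)).filter (fun j : Fin (k * m) => (j : ℕ) % k == i) =
      (List.finRange m).map (fun t => finModDivEquiv k m (i, t)) := by
    apply List.map_injective_iff.mpr Fin.val_injective
    have h := List.filter_map (f := Fin.val) (p := fun j => j % k == i)
      (l := List.finRange (k * m))
    rw [Function.comp_def, hval, filter_range_mul_mod_eq i.isLt m, ← hval m, List.map_map] at h
    rw [← h, List.map_map]
    rfl
  rw [subseqMod, List.length_ofFn, range_zip_ofFn, List.ofFn_eq_map, List.ofFn_eq_map,
    List.filter_map, List.map_map, Function.comp_def, Function.comp_def, hidx, List.map_map]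
  rfl

section Likelihood

variable (M : A → X → Y → ℝ) {k : ℕ} (hk : 0 < k) (a : Fin k → A) (x : X)

lemma cycLik_ofFn {n : ℕ} (g : Fin n → Y) (j : ℕ) :
    cycLik M hk a x j (List.ofFn g) =
      ∏ t : Fin n, M (a ⟨(j + t) % k, Nat.mod_lt _ hk⟩) x (g t) := by
  induction n generalizing j with
  | zero => simp [cycLik]
  | succ n ih =>
    rw [List.ofFn_succ, cycLik, ih, Fin.prod_univ_succ]
    simp [Nat.add_assoc, Nat.add_comm 1]

lemma cycLik_ofFn_mul {m : ℕ} (g : Fin (k * m) → Y) :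
    cycLik M hk a x 0 (List.ofFn g) = ∏ i, ∏ t, M (a i) x (g (finModDivEquiv k m (i, t))) := by
  rw [cycLik_ofFn, ← Fintype.prod_prod_type', ← (finModDivEquiv k m).prod_comp]
  refine Fintype.prod_congr _ _ fun ⟨i, t⟩ => ?_
  simp [Nat.add_mul_mod_self_left, Nat.mod_eq_of_lt i.isLt]

end Likelihood

lemma pow_eq_pow_mul_rpow_neg_logb {p q : ℝ} (hp : 0 < p) (hq : 0 < q) (N : ℕ) :
    p ^ N = q ^ N * 2 ^ (-(N * Real.logb 2 (q / p))) := by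
  rw [← mul_neg, ← Real.logb_inv, inv_div, mul_comm (N : ℝ), Real.rpow_mul zero_le_two,
    Real.rpow_logb two_pos (by norm_num) (by positivity), Real.rpow_natCast, ← mul_pow,
    mul_div_cancel₀ _ hq.ne']

lemma klD_eq_coe_sum [Fintype Y] {q r : Y → ℝ} (h : ∀ y, q y ≠ 0 → r y ≠ 0) :
    klD q r = ((∑ y, q y * Real.logb 2 (q y / r y) : ℝ) : EReal) := by
  rw [klD, show ((∑ y, q y * Real.logb 2 (q y / r y) : ℝ) : EReal) =
      ∑ y, ((q y * Real.logb 2 (q y / r y) : ℝ) : EReal) from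
    map_sum (⟨⟨Real.toEReal, EReal.coe_zero⟩, EReal.coe_add⟩ : ℝ →+ EReal) _ _]
  refine Finset.sum_congr rfl fun y _ => ?_
  by_cases hq : q y = 0
  · simp [hq]
  · simp [hq, h y hq]

lemma one_sub_sum_one_sub_le_prod {ι : Type*} (s : Finset ι) {f : ι → ℝ}
    (h0 : ∀ i ∈ s, 0 ≤ f i) (h1 : ∀ i ∈ s, f i ≤ 1) :
    1 - ∑ i ∈ s, (1 - f i) ≤ ∏ i ∈ s, f i := by
  induction s using Finset.cons_induction with
  | empty => simp
  | cons j s hj ih =>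
    rw [Finset.prod_cons, Finset.sum_cons]
    have hs := ih (fun i hi => h0 i (Finset.mem_cons_of_mem hi))
      (fun i hi => h1 i (Finset.mem_cons_of_mem hi))
    have hsum : 0 ≤ ∑ i ∈ s, (1 - f i) :=
      Finset.sum_nonneg fun i hi => sub_nonneg.mpr (h1 i (Finset.mem_cons_of_mem hi))
    nlinarith [h0 j (Finset.mem_cons_self j s), h1 j (Finset.mem_cons_self j s)]

section Types

variable [DecidableEq Y]

lemma typeOf_nonneg (l : List Y) (y : Y) : 0 ≤ typeOf l y := by
  unfold typeOf; positivity

lemma typeOf_ne_zero_iff {l : List Y} {y : Y} : typeOf l y ≠ 0 ↔ y ∈ l := by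
  simpa [typeOf, List.count_eq_zero, List.length_eq_zero_iff] using List.ne_nil_of_mem

lemma count_eq_length_mul_typeOf (l : List Y) (y : Y) :
    (l.count y : ℝ) = l.length * typeOf l y := by
  by_cases hl : l = []
  · simp [hl]
  · rw [typeOf, mul_div_cancel₀ _ (by simpa using hl)]

lemma prod_map_typeOf_nonneg (l : List Y) : 0 ≤ (l.map (typeOf l)).prod :=
  List.prod_nonneg fun _ hz => by
    obtain ⟨y, -, rfl⟩ := List.mem_map.mp hz
    exact typeOf_nonneg l y

variable [Fintype Y]

lemma sum_typeOf_le_one (l : List Y) : ∑ y, typeOf l y ≤ 1 := by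
  have hcount : ∑ y, l.count y = l.length := by
    simpa using Multiset.sum_count_eq_card (s := Finset.univ) (m := (l : Multiset Y)) (by simp)
  simp only [typeOf, ← Finset.sum_div, ← Nat.cast_sum, hcount]
  exact div_self_le_one _

lemma prod_map_eq_prod_pow_count (l : List Y) (f : Y → ℝ) :
    (l.map f).prod = ∏ y, f y ^ l.count y := by
  rw [Finset.prod_list_map_count]
  exact Finset.prod_subset (Finset.subset_univ _) fun y _ hy => by
    rw [List.count_eq_zero_of_not_mem (by simpa using hy), pow_zero]

lemma prod_map_eq_prod_map_typeOf_mul {p : Y → ℝ} {l : List Y} (hp : ∀ y ∈ l, 0 < p y) :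
    (l.map p).prod = (l.map (typeOf l)).prod *
      2 ^ (-(l.length * ∑ y, typeOf l y * Real.logb 2 (typeOf l y / p y))) := by
  rw [prod_map_eq_prod_pow_count, prod_map_eq_prod_pow_count]
  calc ∏ y, p y ^ l.count y
      = ∏ y, typeOf l y ^ l.count y * 2 ^ (-(l.count y * Real.logb 2 (typeOf l y / p y))) := by
        refine Finset.prod_congr rfl fun y _ => ?_
        by_cases hy : y ∈ l
        · exact pow_eq_pow_mul_rpow_neg_logb (hp y hy)
            ((typeOf_nonneg l y).lt_of_ne' (typeOf_ne_zero_iff.mpr hy)) _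
        · simp [List.count_eq_zero_of_not_mem hy]
    _ = _ := by
        rw [Finset.prod_mul_distrib, ← Real.rpow_sum_of_pos two_pos, Finset.sum_neg_distrib]
        simp only [count_eq_length_mul_typeOf, Finset.mul_sum, mul_assoc]

lemma prod_map_le_of_not_klD_le {p : Y → ℝ} (hp : ∀ y, 0 ≤ p y) {l : List Y} {ε : ℝ}
    (h : ¬ klD (typeOf l) p ≤ ε) :
    (l.map p).prod ≤ (l.map (typeOf l)).prod * 2 ^ (-(l.length : ℝ) * ε) := by
  by_cases hzero : ∃ y ∈ l, p y = 0
  · obtain ⟨y, hy, hpy⟩ := hzero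
    rw [List.prod_eq_zero (List.mem_map.mpr ⟨y, hy, hpy⟩)]
    exact mul_nonneg (prod_map_typeOf_nonneg l) (by positivity)
  push Not at hzero
  rw [klD_eq_coe_sum fun y hy => hzero y (typeOf_ne_zero_iff.mp hy), EReal.coe_le_coe_iff,
    not_le] at h
  rw [prod_map_eq_prod_map_typeOf_mul fun y hy => (hp y).lt_of_ne' (hzero y hy)]
  gcongr
  · exact prod_map_typeOf_nonneg l
  · exact one_le_two
  · nlinarith [(l.length.cast_nonneg : (0 : ℝ) ≤ l.length)]

lemma card_image_typeOf_le (m : ℕ) :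
    (Finset.univ.image fun w : Fin m → Y => typeOf (List.ofFn w)).card ≤
      (m + 1) ^ Fintype.card Y := by
  have hsub : (Finset.univ.image fun w : Fin m → Y => typeOf (List.ofFn w)) ⊆
      (Finset.univ : Finset (Y → Fin (m + 1))).image fun c y => (c y : ℝ) / m := by
    intro q hq
    obtain ⟨w, -, rfl⟩ := Finset.mem_image.mp hq
    refine Finset.mem_image.mpr ⟨fun y => ⟨(List.ofFn w).count y, ?_⟩, Finset.mem_univ _, ?_⟩
    · simpa [Nat.lt_succ_iff] using List.count_le_length (l := List.ofFn w)
    · ext y; simp [typeOf]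
  calc _ ≤ _ := Finset.card_le_card hsub
    _ ≤ (Finset.univ : Finset (Y → Fin (m + 1))).card := Finset.card_image_le
    _ = _ := by simp

lemma sum_prod_typeOf_le (m : ℕ) :
    ∑ w : Fin m → Y, ∏ t, typeOf (List.ofFn w) (w t) ≤ ((m : ℝ) + 1) ^ Fintype.card Y := by
  set types := Finset.univ.image fun w : Fin m → Y => typeOf (List.ofFn w)
  have hclass : ∀ q ∈ types,
      ∑ w ∈ Finset.univ.filter (fun w : Fin m → Y => typeOf (List.ofFn w) = q),
        ∏ t, typeOf (List.ofFn w) (w t) ≤ 1 := by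
    intro q hq
    obtain ⟨w₀, -, rfl⟩ := Finset.mem_image.mp hq
    calc _ = ∑ w ∈ Finset.univ.filter
              (fun w : Fin m → Y => typeOf (List.ofFn w) = typeOf (List.ofFn w₀)),
            ∏ t, typeOf (List.ofFn w₀) (w t) :=
          Finset.sum_congr rfl fun w hw => by rw [(Finset.mem_filter.mp hw).2]
      _ ≤ ∑ w : Fin m → Y, ∏ t, typeOf (List.ofFn w₀) (w t) :=
          Finset.sum_le_sum_of_subset_of_nonneg (Finset.filter_subset _ _) fun w _ _ =>
            Finset.prod_nonneg fun t _ => typeOf_nonneg _ _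
      _ = (∑ y, typeOf (List.ofFn w₀) y) ^ m := (Fintype.sum_pow _ m).symm
      _ ≤ 1 := pow_le_one₀ (Finset.sum_nonneg fun y _ => typeOf_nonneg _ y) (sum_typeOf_le_one _)
  rw [← Finset.sum_fiberwise_of_maps_to (t := types) fun w _ =>
    Finset.mem_image_of_mem _ (Finset.mem_univ w)]
  calc _ ≤ ∑ _q ∈ types, (1 : ℝ) := Finset.sum_le_sum hclass
    _ ≤ _ := by
      rw [Finset.sum_const, nsmul_one]
      exact_mod_cast card_image_typeOf_le m

end Types

section Typical

variable [Fintype Y] [DecidableEq Y]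

def typicalProb (p : Y → ℝ) (m : ℕ) (ε : ℝ) : ℝ :=
  ∑ w : Fin m → Y, if klD (typeOf (List.ofFn w)) p ≤ ε then ∏ t, p (w t) else 0

lemma sum_atypical_le {p : Y → ℝ} (hp : ∀ y, 0 ≤ p y) (m : ℕ) (ε : ℝ) :
    ∑ w : Fin m → Y, (if klD (typeOf (List.ofFn w)) p ≤ ε then 0 else ∏ t, p (w t)) ≤
      ((m : ℝ) + 1) ^ Fintype.card Y * 2 ^ (-(m : ℝ) * ε) := by
  calc _ ≤ ∑ w : Fin m → Y, (∏ t, typeOf (List.ofFn w) (w t)) * 2 ^ (-(m : ℝ) * ε) := by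
        refine Finset.sum_le_sum fun w _ => ?_
        split_ifs with h
        · exact mul_nonneg (Finset.prod_nonneg fun t _ => typeOf_nonneg _ _) (by positivity)
        · simpa [List.map_ofFn, List.prod_ofFn, Function.comp_def] using
            prod_map_le_of_not_klD_le hp h
    _ ≤ _ := by
        rw [← Finset.sum_mul]
        exact mul_le_mul_of_nonneg_right (sum_prod_typeOf_le m) (by positivity)

lemma typicalProb_add_sum_atypical {p : Y → ℝ} (hp : ∑ y, p y = 1) (m : ℕ) (ε : ℝ) :
    typicalProb p m ε +
      ∑ w : Fin m → Y, (if klD (typeOf (List.ofFn w)) p ≤ ε then 0 else ∏ t, p (w t)) = 1 := by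
  rw [typicalProb, ← Finset.sum_add_distrib]
  calc _ = ∑ w : Fin m → Y, ∏ t, p (w t) := Finset.sum_congr rfl fun w _ => by split_ifs <;> simp
    _ = 1 := by rw [← Fintype.sum_pow, hp, one_pow]

lemma typicalProb_nonneg {p : Y → ℝ} (hp : ∀ y, 0 ≤ p y) (m : ℕ) (ε : ℝ) :
    0 ≤ typicalProb p m ε :=
  Finset.sum_nonneg fun w _ => by
    split_ifs
    · exact Finset.prod_nonneg fun t _ => hp (w t)
    · exact le_rfl

lemma typicalProb_le_one {p : Y → ℝ} (hp : p ∈ stdSimplex ℝ Y) (m : ℕ) (ε : ℝ) :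
    typicalProb p m ε ≤ 1 := by
  have hatyp : 0 ≤ ∑ w : Fin m → Y,
      (if klD (typeOf (List.ofFn w)) p ≤ ε then 0 else ∏ t, p (w t)) :=
    Finset.sum_nonneg fun w _ => by
      split_ifs
      · exact le_rfl
      · exact Finset.prod_nonneg fun t _ => hp.1 (w t)
  linarith [typicalProb_add_sum_atypical hp.2 m ε]

lemma one_sub_typicalProb_le {p : Y → ℝ} (hp : p ∈ stdSimplex ℝ Y) (m : ℕ) (ε : ℝ) :
    1 - typicalProb p m ε ≤ ((m : ℝ) + 1) ^ Fintype.card Y * 2 ^ (-(m : ℝ) * ε) := by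
  linarith [typicalProb_add_sum_atypical hp.2 m ε, sum_atypical_le hp.1 m ε]

lemma tsum_typicalSet_eq_prod_typicalProb (M : A → X → Y → ℝ) {k : ℕ} (hk : 0 < k)
    (a : Fin k → A) (x : X) (m : ℕ) (ε : ℝ) :
    ∑' ys : List Y,
        (if ys.length = k * m ∧
            (∀ i : Fin k, klD (typeOf (subseqMod k i ys)) (M (a i) x) ≤ (ε : EReal))
          then cycLik M hk a x 0 ys else 0) =
      ∏ i, typicalProb (M (a i) x) m ε := by
  simp_rw [ite_and]
  rw [tsum_ite_length_eq_sum_ofFn]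
  simp only [typicalProb]
  rw [Fintype.prod_sum, ← sum_comp_finModDivEquiv k m]
  refine Fintype.sum_congr _ _ fun g => ?_
  simp only [Fintype.prod_ite_zero, subseqMod_ofFn, cycLik_ofFn_mul]
  congr 1

end Typical

theorem typical_set_probability_bound_general
    [Fintype Y] [DecidableEq Y]
    (M : A → X → Y → ℝ) (hM : IsMechanism M)
    (k : ℕ) (hk : 0 < k) (a : Fin k → A)
    (n : ℕ) (hdvd : k ∣ n) (x : X) (ε : ℝ) :
    1 - (2 : ℝ) ^ (-((n : ℝ) / (k : ℝ)) * ε) *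
          ((n : ℝ) / (k : ℝ) + 1) ^ (k * Fintype.card Y) *
          ((k * ((Finset.Icc 1 k).sup fun i => Nat.choose k i) : ℕ) : ℝ) ≤
      ∑' ys : List Y,
        if ys.length = n ∧
            (∀ i : Fin k, klD (typeOf (subseqMod k i ys)) (M (a i) x) ≤ (ε : EReal))
          then cycLik M hk a x 0 ys else 0 := by
  obtain ⟨m, rfl⟩ := hdvd
  have hm : ((k * m : ℕ) : ℝ) / k = m := by
    rw [Nat.cast_mul, mul_div_cancel_left₀ _ (by exact_mod_cast hk.ne')]
  have hC : (k : ℝ) ≤ ((k * ((Finset.Icc 1 k).sup fun i => Nat.choose k i) : ℕ) : ℝ) := by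
    have h1 : 1 ≤ (Finset.Icc 1 k).sup fun i => Nat.choose k i := by
      simpa using Finset.le_sup (f := fun i => Nat.choose k i) (Finset.right_mem_Icc.mpr hk)
    exact_mod_cast Nat.le_mul_of_pos_right k h1
  have hpow : ((m : ℝ) + 1) ^ Fintype.card Y ≤ ((m : ℝ) + 1) ^ (k * Fintype.card Y) :=
    pow_le_pow_right₀ (by linarith [m.cast_nonneg (α := ℝ)]) (Nat.le_mul_of_pos_left _ hk)
  rw [hm, tsum_typicalSet_eq_prod_typicalProb]
  calc _ ≤ 1 - ∑ _i : Fin k, ((m : ℝ) + 1) ^ Fintype.card Y * 2 ^ (-(m : ℝ) * ε) := by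
        rw [Finset.sum_const, Finset.card_univ, Fintype.card_fin, nsmul_eq_mul,
          sub_le_sub_iff_left]
        calc (k : ℝ) * (((m : ℝ) + 1) ^ Fintype.card Y * 2 ^ (-(m : ℝ) * ε))
            = 2 ^ (-(m : ℝ) * ε) * ((m : ℝ) + 1) ^ Fintype.card Y * k := by ring
          _ ≤ _ := by gcongr
    _ ≤ 1 - ∑ i, (1 - typicalProb (M (a i) x) m ε) := by
        gcongr with i
        exact one_sub_typicalProb_le (hM _ x) m ε
    _ ≤ _ := one_sub_sum_one_sub_le_prod _ (fun i _ => typicalProb_nonneg (hM _ x).1 m ε)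
        fun i _ => typicalProb_le_one (hM _ x) m ε

/-- Lemma B.2: for the lock-step strategy, `n` a multiple of `k`,
`x ∈ X` and `ε > 0`, the probability (given `x`) of the set
`𝒰^{(n)}(x,ε) = {y^n : D(t_{y^n(i)}‖p_{a_i}(·|x)) ≤ ε for all i}` is at least
`1 − 2^{−(n/k)ε}·(n/k + 1)^{k|Y|}·C`, where `C = k·max_{1≤i≤k} C(k,i)`. -/
theorem typical_set_probability_bound
    [Fintype X] [Fintype Y] [DecidableEq Y] [Fintype A]
    [Nonempty X] [Nonempty Y] [Nonempty A]
    (M : A → X → Y → ℝ) (hM : IsMechanism M)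
    (k : ℕ) (hk : 0 < k) (a : Fin k → A) (ha : Function.Bijective a)
    (n : ℕ) (hdvd : k ∣ n) (x : X) (ε : ℝ) (hε : 0 < ε) :
    1 - (2 : ℝ) ^ (-((n : ℝ) / (k : ℝ)) * ε) *
          ((n : ℝ) / (k : ℝ) + 1) ^ (k * Fintype.card Y) *
          ((k * ((Finset.Icc 1 k).sup fun i => Nat.choose k i) : ℕ) : ℝ) ≤
      ∑' ys : List Y,
        if ys.length = n ∧
            (∀ i : Fin k, klD (typeOf (subseqMod k i ys)) (M (a i) x) ≤ (ε : EReal))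
          then cycLik M hk a x 0 ys else 0 :=
  typical_set_probability_bound_general M hM k hk a n hdvd x ε

end
end
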